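/- arXiv:1312.2067 — 8 statements merged into one kernel-verified Lean document; each statement's English description precedes it below -/
import Mathlib

section
/- Let (X, Σ, μ) be a σ-finite measure space, u a measurable complex function on X, and φ : X → X a measurable non-singular transformation (μ∘φ⁻¹ ≪ μ). Let J be the Radon–Nikodym derivative of μ_u∘φ⁻¹ with respect to μ, where μ_u(E) = ∫_E |u|² dμ. Define w = 1 + J and dν = w dμ. Then for every measurable f : X → ℂ, one has ∫|f|² dμ + ∫|u·(f∘φ)|² dμ = ∫|f|² dν; in particular, f belongs to the domain D(uC_φ) = {f ∈ L²(μ) : u·(f∘φ) ∈ L²(μ)} if and only if f ∈ L²(ν). -/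
/-!
The Radon–Nikodym derivative `J` of `μ_u ∘ φ⁻¹` turns integration against `μ_u ∘ φ⁻¹` into
integration against `J dμ`, so `∫ J |f|² dμ = ∫ |f ∘ φ|² dμ_u = ∫ |u · (f ∘ φ)|² dμ`. Adding
`∫ |f|² dμ` gives `∫ |f|² (1 + J) dμ = ∫ |f|² dν`, and a sum of two nonnegative integrals is
finite iff both are.
-/

open MeasureTheory ENNReal

theorem memLp_two_iff_lintegral_nnnorm_sq_lt_top {α E : Type*} [MeasurableSpace α]
    {μ : Measure α} [NormedAddCommGroup E] {f : α → E} (hf : AEStronglyMeasurable f μ) :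
    MemLp f 2 μ ↔ ∫⁻ x, (‖f x‖₊ : ℝ≥0∞) ^ 2 ∂μ < ∞ := by
  rw [MemLp, and_iff_right hf,
    eLpNorm_lt_top_iff_lintegral_rpow_enorm_lt_top two_ne_zero ofNat_ne_top]
  simp_rw [toReal_ofNat, enorm_eq_nnnorm, ← ENNReal.rpow_natCast, Nat.cast_ofNat]

theorem lintegral_rnDeriv_map_withDensity_mul {α β : Type*} [MeasurableSpace α]
    [MeasurableSpace β] {μ : Measure α} [SFinite μ] {ρ : Measure β} [SigmaFinite ρ]
    {w : α → ℝ≥0∞} (hw : Measurable w) {φ : α → β} (hφ : Measurable φ)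
    (hac : (μ.withDensity w).map φ ≪ ρ) {g : β → ℝ≥0∞} (hg : Measurable g) :
    ∫⁻ y, ((μ.withDensity w).map φ).rnDeriv ρ y * g y ∂ρ = ∫⁻ x, w x * g (φ x) ∂μ := by
  rw [lintegral_rnDeriv_mul hac hg.aemeasurable, lintegral_map hg hφ]
  exact lintegral_withDensity_eq_lintegral_mul _ hw (hg.comp hφ)

/-- Lemma 2.1(a): with `w = 1 + J` and `dν = w dμ`, for every measurable `f` one has
`∫|f|² dμ + ∫|u·(f∘φ)|² dμ = ∫|f|² dν`, hence `f ∈ D(uC_φ)` iff `f ∈ L²(ν)`. -/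
theorem stmt0
    {X : Type*} [MeasurableSpace X] (μ : Measure X) [SigmaFinite μ]
    (u : X → ℂ) (hu : Measurable u)
    (φ : X → X) (hφ : Measurable φ)
    (hns : (μ.map φ) ≪ μ)
    (J : X → ℝ≥0∞)
    (hJ : J = ((μ.withDensity fun x => (‖u x‖₊ : ℝ≥0∞) ^ 2).map φ).rnDeriv μ)
    (ν : Measure X) (hν : ν = μ.withDensity fun x => 1 + J x)
    (f : X → ℂ) (hf : Measurable f) :
    (∫⁻ x, (‖f x‖₊ : ℝ≥0∞) ^ 2 ∂μ) +
      (∫⁻ x, (‖u x * f (φ x)‖₊ : ℝ≥0∞) ^ 2 ∂μ) =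
      ∫⁻ x, (‖f x‖₊ : ℝ≥0∞) ^ 2 ∂ν ∧
    ((MemLp f 2 μ ∧ MemLp (fun x => u x * f (φ x)) 2 μ) ↔ MemLp f 2 ν) := by
  have hf_sq : Measurable fun x => (‖f x‖₊ : ℝ≥0∞) ^ 2 := by fun_prop
  have hJ_meas : Measurable J := hJ ▸ Measure.measurable_rnDeriv _ _
  have hJ_lintegral : ∫⁻ x, J x * (‖f x‖₊ : ℝ≥0∞) ^ 2 ∂μ =
      ∫⁻ x, (‖u x * f (φ x)‖₊ : ℝ≥0∞) ^ 2 ∂μ := by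
    rw [hJ, lintegral_rnDeriv_map_withDensity_mul (by fun_prop) hφ
      (((withDensity_absolutelyContinuous μ _).map hφ).trans hns) hf_sq]
    simp [mul_pow]
  have h_eq : (∫⁻ x, (‖f x‖₊ : ℝ≥0∞) ^ 2 ∂μ) +
      (∫⁻ x, (‖u x * f (φ x)‖₊ : ℝ≥0∞) ^ 2 ∂μ) = ∫⁻ x, (‖f x‖₊ : ℝ≥0∞) ^ 2 ∂ν := by
    rw [hν, lintegral_withDensity_eq_lintegral_mul _ (by fun_prop) hf_sq, ← hJ_lintegral,
      ← lintegral_add_left hf_sq]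
    simp [add_mul]
  refine ⟨h_eq, ?_⟩
  rw [memLp_two_iff_lintegral_nnnorm_sq_lt_top hf.aestronglyMeasurable,
    memLp_two_iff_lintegral_nnnorm_sq_lt_top (by fun_prop),
    memLp_two_iff_lintegral_nnnorm_sq_lt_top hf.aestronglyMeasurable, ← h_eq, add_lt_top]
end

section
/- With the setup above, the domain D(uC_φ) is dense in L²(μ) if and only if J < ∞ μ-almost everywhere, where J = d(μ_u∘φ⁻¹)/dμ. -/
open MeasureTheory ENNReal Filter Topology

/-!
Pushing `|u|² dμ` forward by `φ` turns `∫ |u · f ∘ φ|² dμ` into `∫ |f|² J dμ`, so `D(uC_φ)` consists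
of the `f ∈ L²(μ)` that also lie in `L²(J dμ)`. Such an `f` vanishes a.e. on `{J = ∞}`, so it stays at
distance `‖1_F‖` from the indicator of any `F ⊆ {J = ∞}` of finite positive measure. Conversely, if
`J < ∞` a.e., the truncations of `f` to `{J ≤ n}` lie in the domain and converge to `f`.
-/

section

variable {α : Type*} [MeasurableSpace α] {μ : Measure α} {p : ℝ≥0∞}

theorem memLp_mul_comp_iff {β 𝕜 : Type*} [MeasurableSpace β] [NormedRing 𝕜] [NormMulClass 𝕜]
    {u : α → 𝕜} {f : β → 𝕜} {φ : α → β}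
    (hu : AEStronglyMeasurable u μ) (hf : StronglyMeasurable f) (hφ : Measurable φ)
    (hp0 : p ≠ 0) (hp : p ≠ ∞) :
    MemLp (fun x => u x * f (φ x)) p μ ↔
      MemLp f p ((μ.withDensity fun x => ‖u x‖ₑ ^ p.toReal).map φ) := by
  have hfp : Measurable fun y => ‖f y‖ₑ ^ p.toReal := hf.enorm.pow_const _
  have hmeas : AEStronglyMeasurable (fun x => u x * f (φ x)) μ :=
    hu.mul (hf.comp_measurable hφ).aestronglyMeasurable
  have hlint : ∫⁻ x, ‖u x * f (φ x)‖ₑ ^ p.toReal ∂μ =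
      ∫⁻ y, ‖f y‖ₑ ^ p.toReal ∂(μ.withDensity fun x => ‖u x‖ₑ ^ p.toReal).map φ := by
    rw [lintegral_map hfp hφ, lintegral_withDensity_eq_lintegral_mul₀
      (hu.enorm.pow_const _) (g := fun x => ‖f (φ x)‖ₑ ^ p.toReal) (hfp.comp hφ).aemeasurable]
    simp only [enorm_mul, ENNReal.mul_rpow_of_nonneg _ _ toReal_nonneg, Pi.mul_apply]
  simp only [MemLp, eLpNorm_lt_top_iff_lintegral_rpow_enorm_lt_top hp0 hp, hlint,
    hf.aestronglyMeasurable, hmeas, true_and]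

variable {E : Type*} [NormedAddCommGroup E] {J : α → ℝ≥0∞}

theorem tendsto_eLpNorm_restrict_of_antitone {f : α → E}
    (hp0 : p ≠ 0) (hp : p ≠ ∞) (hf : MemLp f p μ) {s : ℕ → Set α}
    (hs : ∀ n, MeasurableSet (s n)) (hanti : Antitone s) (hnull : μ (⋂ n, s n) = 0) :
    Tendsto (fun n => eLpNorm f p (μ.restrict (s n))) atTop (𝓝 0) := by
  set ρ := μ.withDensity fun x => ‖f x‖ₑ ^ p.toReal
  have hρ : ∀ n, eLpNorm f p (μ.restrict (s n)) = ρ (s n) ^ (1 / p.toReal) := fun n => by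
    rw [eLpNorm_eq_lintegral_rpow_enorm_toReal hp0 hp, withDensity_apply _ (hs n)]
  have hρ_fin : ρ (s 0) ≠ ∞ := by
    refine ne_top_of_le_ne_top ?_ (measure_mono (Set.subset_univ _))
    rw [withDensity_apply _ MeasurableSet.univ, Measure.restrict_univ]
    exact ((eLpNorm_lt_top_iff_lintegral_rpow_enorm_lt_top hp0 hp).1 hf.2).ne
  have hlim : Tendsto (fun n => ρ (s n)) atTop (𝓝 0) := by
    rw [← withDensity_absolutelyContinuous μ _ hnull]
    exact tendsto_measure_iInter_atTop (fun n => (hs n).nullMeasurableSet) hanti ⟨0, hρ_fin⟩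
  have hpos : 0 < 1 / p.toReal := one_div_pos.2 (toReal_pos hp0 hp)
  rw [tendsto_congr hρ, ← zero_rpow_of_pos hpos]
  exact ((ENNReal.continuous_rpow_const (y := 1 / p.toReal)).tendsto 0).comp hlim

theorem MemLp.ae_eq_zero_of_density_eq_top {f : α → E} (hJ : AEMeasurable J μ)
    (hfm : AEStronglyMeasurable f μ) (hp0 : p ≠ 0) (hp : p ≠ ∞)
    (hf : MemLp f p (μ.withDensity J)) : ∀ᵐ x ∂μ, J x = ∞ → f x = 0 := by
  have hfp : AEMeasurable (fun x => ‖f x‖ₑ ^ p.toReal) μ := hfm.enorm.pow_const _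
  have hfin := (eLpNorm_lt_top_iff_lintegral_rpow_enorm_lt_top hp0 hp).1 hf.2
  rw [lintegral_withDensity_eq_lintegral_mul₀ hJ hfp] at hfin
  filter_upwards [ae_lt_top' (hJ.mul hfp) hfin.ne] with x hx hJx
  by_contra hfx
  have : ‖f x‖ₑ ^ p.toReal ≠ 0 := by simpa [toReal_pos hp0 hp] using hfx
  simp [hJx, top_mul this] at hx

theorem MemLp.indicator_withDensity_of_le {f : α → E} {s : Set α} {c : ℝ≥0∞}
    (hs : MeasurableSet s) (hJs : ∀ x ∈ s, J x ≤ c) (hc : c ≠ ∞) (hf : MemLp f p μ) :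
    MemLp (s.indicator f) p (μ.withDensity J) := by
  rw [memLp_indicator_iff_restrict hs, restrict_withDensity hs]
  refine (hf.restrict s).of_measure_le_smul hc ?_
  calc (μ.restrict s).withDensity J ≤ (μ.restrict s).withDensity fun _ => c :=
        withDensity_mono ((ae_restrict_iff' hs).2 (Eventually.of_forall hJs))
    _ = c • μ.restrict s := withDensity_const c

variable [Fact (1 ≤ p)]

theorem dense_memLp_withDensity_of_ae_lt_top (hp : p ≠ ∞) (hJ : Measurable J)
    (hJfin : ∀ᵐ x ∂μ, J x < ∞) :
    Dense {f : Lp E p μ | MemLp f p (μ.withDensity J)} := by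
  intro f
  set S : ℕ → Set α := fun n => {x | J x ≤ n}
  have hS : ∀ n, MeasurableSet (S n) := fun n => hJ measurableSet_Iic
  have hSf : ∀ n, MemLp ((S n).indicator f) p μ := fun n => (Lp.memLp f).indicator (hS n)
  refine mem_closure_of_tendsto (f := fun n => (hSf n).toLp) (b := atTop) ?_
    (Eventually.of_forall fun n => ?_)
  · conv => arg 3; rw [← Lp.toLp_coeFn f (Lp.memLp f)]
    rw [Lp.tendsto_Lp_iff_tendsto_eLpNorm'']
    have hcompl : ∀ n, (S n).indicator f - f = -(S n)ᶜ.indicator f := fun n => by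
      rw [Set.indicator_compl, neg_sub]
    simp only [hcompl, eLpNorm_neg, eLpNorm_indicator_eq_eLpNorm_restrict (hS _).compl]
    refine tendsto_eLpNorm_restrict_of_antitone (zero_lt_one.trans_le Fact.out).ne' hp
      (Lp.memLp f) (fun n => (hS n).compl) (fun m n hmn => Set.compl_subset_compl.2 ?_) ?_
    · exact fun x (hx : J x ≤ m) => hx.trans (by exact_mod_cast hmn)
    · refine measure_mono_null (fun x hx => ?_) (ae_iff.1 hJfin)
      intro hJx
      obtain ⟨n, hn⟩ := ENNReal.exists_nat_gt hJx.ne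
      exact Set.mem_iInter.1 hx n hn.le
  · exact (MemLp.indicator_withDensity_of_le (hS n) (fun x hx => hx) (natCast_ne_top n)
      (Lp.memLp f)).ae_eq
      (EventuallyEq.symm ((withDensity_absolutelyContinuous μ J).ae_le (hSf n).coeFn_toLp))

theorem ae_lt_top_of_dense_memLp_withDensity [SigmaFinite μ] [Nontrivial E] (hp : p ≠ ∞)
    (hJ : Measurable J) (hD : Dense {f : Lp E p μ | MemLp f p (μ.withDensity J)}) :
    ∀ᵐ x ∂μ, J x < ∞ := by
  have hp0 : p ≠ 0 := (zero_lt_one.trans_le Fact.out).ne'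
  by_contra hJfin
  have hpos : 0 < μ {x | J x = ∞} := by
    refine pos_iff_ne_zero.2 fun h0 => hJfin ?_
    rw [ae_iff]
    simpa only [lt_top_iff_ne_top, not_not] using h0
  obtain ⟨F, hF, hFJ, hF0, hFfin⟩ :=
    Measure.exists_subset_measure_lt_top (hJ (measurableSet_singleton ∞)) hpos
  obtain ⟨c, hc⟩ := exists_ne (0 : E)
  set g := indicatorConstLp p hF hFfin.ne c
  have hg : 0 < ‖g‖ := by
    rw [norm_indicatorConstLp hp0 hp]
    exact _root_.mul_pos (norm_pos_iff.2 hc)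
      (Real.rpow_pos_of_pos (toReal_pos hF0.ne' hFfin.ne) _)
  obtain ⟨f, hfD, hfg⟩ := hD.exists_dist_lt g hg
  have hf0 := MemLp.ae_eq_zero_of_density_eq_top hJ.aemeasurable (Lp.aestronglyMeasurable f)
    hp0 hp hfD
  refine (hfg.trans_le' ?_).false
  rw [dist_eq_norm]
  refine Lp.norm_le_norm_of_ae_le ?_
  filter_upwards [hf0, indicatorConstLp_coeFn (hs := hF) (hμs := hFfin.ne) (c := c),
    Lp.coeFn_sub g f] with x hfx hgx hsub
  rw [hsub, Pi.sub_apply]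
  by_cases hxF : x ∈ F
  · rw [hfx (hFJ hxF), sub_zero]
  · rw [hgx, Set.indicator_of_notMem hxF, norm_zero]
    exact norm_nonneg _

theorem dense_memLp_withDensity_iff [SigmaFinite μ] [Nontrivial E] (hp : p ≠ ∞)
    (hJ : Measurable J) :
    Dense {f : Lp E p μ | MemLp f p (μ.withDensity J)} ↔ ∀ᵐ x ∂μ, J x < ∞ :=
  ⟨ae_lt_top_of_dense_memLp_withDensity hp hJ, dense_memLp_withDensity_of_ae_lt_top hp hJ⟩

end

/-- Lemma 2.1(b): `D(uC_φ)` is dense in `L²(μ)` iff `J < ∞` μ-a.e. -/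
theorem stmt1
    {X : Type*} [MeasurableSpace X] (μ : Measure X) [SigmaFinite μ]
    (u : X → ℂ) (hu : Measurable u)
    (φ : X → X) (hφ : Measurable φ)
    (hns : (μ.map φ) ≪ μ)
    (J : X → ℝ≥0∞)
    (hJ : J = ((μ.withDensity fun x => (‖u x‖₊ : ℝ≥0∞) ^ 2).map φ).rnDeriv μ) :
    Dense {f : Lp ℂ 2 μ |
        MemLp (fun x => u x * (f : X → ℂ) (φ x)) 2 μ} ↔
      ∀ᵐ x ∂μ, J x < ∞ := by
  set ν := (μ.withDensity fun x => ‖u x‖ₑ ^ (2 : ℝ≥0∞).toReal).map φ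
  have hν : ν = (μ.withDensity fun x => (‖u x‖₊ : ℝ≥0∞) ^ 2).map φ := by
    simp only [ν, toReal_ofNat, rpow_two, enorm_eq_nnnorm]
  have hνJ : μ.withDensity J = ν := by
    rw [hJ, ← hν]
    exact Measure.withDensity_rnDeriv_eq ν μ
      (((withDensity_absolutelyContinuous μ _).map hφ).trans hns)
  have hdomain : {f : Lp ℂ 2 μ | MemLp (fun x => u x * (f : X → ℂ) (φ x)) 2 μ} =
      {f : Lp ℂ 2 μ | MemLp f 2 (μ.withDensity J)} := by
    ext f
    rw [Set.mem_ofPred_eq, memLp_mul_comp_iff hu.aestronglyMeasurable (Lp.stronglyMeasurable f) hφ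
      two_ne_zero ofNat_ne_top, hνJ]
    rfl
  rw [hdomain]
  exact dense_memLp_withDensity_iff ofNat_ne_top (hJ ▸ Measure.measurable_rnDeriv _ _)
end

section
/- Let (X, Σ, μ) be σ-finite, u measurable, φ measurable non-singular, and for n ≥ 0 let J_n be defined by J_0 = 1 and J_n = d(ν_{n-1}∘φ⁻¹)/dμ where dν_{n-1} = J_{n-1}|u|² dμ. Then for every n ≥ 1 and every f with u_{φ,n}·(f∘φⁿ) ∈ L²(μ), where u_{φ,n} = u·(u∘φ)·(u∘φ²)⋯(u∘φ^{n-1}), one has ∫ |u_{φ,n}|²·|f∘φⁿ|² dμ = ∫ J_n |f|² dμ. -/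
open MeasureTheory ENNReal Finset

/-!
Pushing the density `J n * |u|²` forward along `φ` and integrating against `g` gives
`∫ J (n+1) g = ∫ J n |u|² (g ∘ φ)`. Iterating this change of variables `n` times moves all
weights onto the orbit: `∫ Jₙ g = ∫ (∏_{i<n} |u ∘ φ^i|²) (g ∘ φⁿ)`, and `g = |f|²` is the claim.
-/

namespace MeasureTheory

theorem lintegral_rnDeriv_map_withDensity_mul {X Y : Type*} [MeasurableSpace X]
    [MeasurableSpace Y] {μ : Measure X} {ν : Measure Y} [SigmaFinite μ] [SFinite ν]
    {φ : Y → X} (hφ : Measurable φ) (hνμ : ν.map φ ≪ μ) {w : Y → ℝ≥0∞} (hw : Measurable w)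
    {g : X → ℝ≥0∞} (hg : Measurable g) :
    ∫⁻ x, ((ν.withDensity w).map φ).rnDeriv μ x * g x ∂μ = ∫⁻ y, w y * g (φ y) ∂ν := by
  have hac : (ν.withDensity w).map φ ≪ μ :=
    ((withDensity_absolutelyContinuous ν w).map hφ).trans hνμ
  rw [lintegral_rnDeriv_mul hac hg.aemeasurable, lintegral_map hg hφ]
  exact lintegral_withDensity_eq_lintegral_mul ν hw (hg.comp hφ)

theorem lintegral_mul_eq_lintegral_prod_iterate {X : Type*} [MeasurableSpace X]
    {μ : Measure X} [SigmaFinite μ] {φ : X → X} (hφ : Measurable φ) (hns : μ.map φ ≪ μ)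
    {w : X → ℝ≥0∞} (hw : Measurable w) {J : ℕ → X → ℝ≥0∞} (hJ0 : J 0 = fun _ => 1)
    (hJ : ∀ n, J (n + 1) = ((μ.withDensity fun x => J n x * w x).map φ).rnDeriv μ)
    (n : ℕ) {g : X → ℝ≥0∞} (hg : Measurable g) :
    ∫⁻ x, J n x * g x ∂μ = ∫⁻ x, (∏ i ∈ range n, w (φ^[i] x)) * g (φ^[n] x) ∂μ := by
  have hJmeas : ∀ m, Measurable (J m)
    | 0 => hJ0 ▸ measurable_const
    | m + 1 => hJ m ▸ Measure.measurable_rnDeriv _ _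
  induction n generalizing g with
  | zero => simp [hJ0]
  | succ m ih =>
    calc ∫⁻ x, J (m + 1) x * g x ∂μ
        = ∫⁻ x, J m x * (w x * g (φ x)) ∂μ := by
          rw [hJ m, lintegral_rnDeriv_map_withDensity_mul hφ hns
            (w := fun x => J m x * w x) ((hJmeas m).mul hw) hg]
          simp only [mul_assoc]
      _ = ∫⁻ x, (∏ i ∈ range (m + 1), w (φ^[i] x)) * g (φ^[m + 1] x) ∂μ := by
          rw [ih (g := fun x => w x * g (φ x)) (hw.mul (hg.comp hφ))]
          simp only [prod_range_succ, Function.iterate_succ_apply', mul_assoc]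

end MeasureTheory

theorem stmt3_general
    {X : Type*} [MeasurableSpace X] (μ : Measure X) [SigmaFinite μ]
    (u : X → ℂ) (hu : Measurable u)
    (φ : X → X) (hφ : Measurable φ)
    (hns : (μ.map φ) ≪ μ)
    (J : ℕ → X → ℝ≥0∞)
    (hJ0 : J 0 = fun _ => 1)
    (hJ : ∀ n : ℕ, J (n + 1) =
      ((μ.withDensity fun x => J n x * (‖u x‖₊ : ℝ≥0∞) ^ 2).map φ).rnDeriv μ)
    (n : ℕ)
    (f : X → ℂ) (hf : Measurable f) :
    ∫⁻ x, (‖(∏ i ∈ range n, u (φ^[i] x)) * f (φ^[n] x)‖₊ : ℝ≥0∞) ^ 2 ∂μ =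
      ∫⁻ x, J n x * (‖f x‖₊ : ℝ≥0∞) ^ 2 ∂μ := by
  rw [lintegral_mul_eq_lintegral_prod_iterate hφ hns
    (hu.nnnorm.coe_nnreal_ennreal.pow_const 2) hJ0 hJ n
    (hf.nnnorm.coe_nnreal_ennreal.pow_const 2)]
  simp only [nnnorm_mul, nnnorm_prod, coe_mul, ofNNReal_finsetProd, mul_pow, prod_pow]

/-- `‖(uC_φ)ⁿ f‖² = ∫ Jₙ |f|² dμ` where `J₀ = 1` and
`Jₙ = d((J_{n-1}|u|² μ) ∘ φ⁻¹)/dμ`, and `u_{φ,n} = ∏_{i<n} u ∘ φ^i`. -/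
theorem stmt3
    {X : Type*} [MeasurableSpace X] (μ : Measure X) [SigmaFinite μ]
    (u : X → ℂ) (hu : Measurable u)
    (φ : X → X) (hφ : Measurable φ)
    (hns : (μ.map φ) ≪ μ)
    (J : ℕ → X → ℝ≥0∞)
    (hJ0 : J 0 = fun _ => 1)
    (hJ : ∀ n : ℕ, J (n + 1) =
      ((μ.withDensity fun x => J n x * (‖u x‖₊ : ℝ≥0∞) ^ 2).map φ).rnDeriv μ)
    (n : ℕ) (hn : 1 ≤ n)
    (f : X → ℂ) (hf : Measurable f)
    (hdom : MemLp (fun x => (∏ i ∈ range n, u (φ^[i] x)) * f (φ^[n] x)) 2 μ) :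
    ∫⁻ x, (‖(∏ i ∈ range n, u (φ^[i] x)) * f (φ^[n] x)‖₊ : ℝ≥0∞) ^ 2 ∂μ =
      ∫⁻ x, J n x * (‖f x‖₊ : ℝ≥0∞) ^ 2 ∂μ :=
  stmt3_general μ u hu φ hφ hns J hJ0 hJ n f hf
end

section
/- Assume D(uC_φ) is dense in L²(μ) and all J_n are finite a.e. Then uC_φ maps its domain into itself (uC_φ(D(uC_φ)) ⊆ D(uC_φ)) if and only if there exists c > 0 such that J_2 ≤ c(1 + J_1) μ-almost everywhere. -/
open MeasureTheory ENNReal NNReal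

/-!
By the change of variables behind the Radon–Nikodym derivatives `J n`, for measurable `f`
`‖u · f ∘ φ‖₂² = ∫ J₁ |f|²` and `‖(uC_φ)² f‖₂² = ∫ J₂ |f|²`. Hence `uC_φ` preserves its domain iff
`∫ (1 + J₁) |f|² < ∞` forces `∫ J₂ |f|² < ∞`, which is clear under `J₂ ≤ c (1 + J₁)`.
Conversely, if that bound fails for every `c`, σ-finiteness of `(1 + J₁) μ` gives sets `Bₙ` of
finite positive `(1 + J₁) μ`-measure on which `J₂ > n 2ⁿ (1 + J₁)`. The function
`g = ∑ₙ 2⁻ⁿ 𝟙_{Bₙ} / ∫_{Bₙ} (1 + J₁)` has `∫ (1 + J₁) g = 2` but `∫ J₂ g ≥ n` for all `n`, so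
`f = √g` lies in the domain while `uC_φ f` does not.
-/

theorem memLp_two_iff_lintegral_enorm_sq_lt_top {X E : Type*} [MeasurableSpace X]
    {μ : Measure X} [NormedAddCommGroup E] {f : X → E} (hf : AEStronglyMeasurable f μ) :
    MemLp f 2 μ ↔ ∫⁻ x, ‖f x‖ₑ ^ 2 ∂μ < ∞ := by
  rw [MemLp, eLpNorm_lt_top_iff_lintegral_rpow_enorm_lt_top two_ne_zero ofNat_ne_top]
  simp [hf]

section WeightedIntegrability

variable {X : Type*} [MeasurableSpace X] {μ : Measure X} {v w : X → ℝ≥0∞}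

theorem exists_lintegral_mul_lt_top_and_eq_top [SigmaFinite μ] (hv : Measurable v)
    (hw : Measurable w) (hv0 : ∀ᵐ x ∂μ, v x ≠ 0) (hvtop : ∀ᵐ x ∂μ, v x ≠ ∞)
    (h : ∀ c : ℝ≥0, ¬ ∀ᵐ x ∂μ, w x ≤ c * v x) :
    ∃ g : X → ℝ≥0∞, Measurable g ∧ ∫⁻ x, v x * g x ∂μ < ∞ ∧ ∫⁻ x, w x * g x ∂μ = ∞ := by
  set ν := μ.withDensity v
  have : SigmaFinite ν := SigmaFinite.withDensity_of_ne_top hvtop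
  have hμν : μ ≪ ν := withDensity_absolutelyContinuous' hv.aemeasurable hv0
  set c : ℕ → ℝ≥0 := fun n => n * 2 ^ n
  have hB : ∀ n, ∃ B, MeasurableSet B ∧ B ⊆ {x | c n * v x < w x} ∧ 0 < ν B ∧ ν B < ∞ := by
    intro n
    refine Measure.exists_subset_measure_lt_top (measurableSet_lt (hv.const_mul _) hw) ?_
    refine pos_iff_ne_zero.2 fun h0 => h (c n) ?_
    filter_upwards [measure_eq_zero_iff_ae_notMem.1 (hμν h0)] with x hx
    simpa using hx
  choose B hBm hBA hB0 hBtop using hB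
  set p : ℕ → ℝ≥0∞ := fun n => 2⁻¹ ^ n
  set g : X → ℝ≥0∞ := fun x => ∑' n, (B n).indicator (fun _ => p n / ν (B n)) x
  have hg : Measurable g := .tsum fun n => measurable_const.indicator (hBm n)
  refine ⟨g, hg, ?_, ?_⟩
  · have hvg : ∫⁻ x, v x * g x ∂μ = ∑' n, p n := by
      refine (lintegral_withDensity_eq_lintegral_mul _ hv hg).symm.trans ?_
      rw [lintegral_tsum fun n => (measurable_const.indicator (hBm n)).aemeasurable]
      refine tsum_congr fun n => ?_
      rw [lintegral_indicator_const (hBm n), ENNReal.div_mul_cancel (hB0 n).ne' (hBtop n).ne]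
    rw [hvg, ENNReal.tsum_geometric, ENNReal.one_sub_inv_two, inv_inv]
    exact ofNat_lt_top
  · refine eq_top_of_forall_nnreal_le fun r => ?_
    obtain ⟨n, hn⟩ := exists_nat_ge r
    have hwB : c n * ν (B n) ≤ ∫⁻ x in B n, w x ∂μ := by
      rw [withDensity_apply _ (hBm n), ← lintegral_const_mul _ hv]
      exact setLIntegral_mono hw fun x hx => (hBA n hx).le
    calc (r : ℝ≥0∞) ≤ n := by exact_mod_cast hn
      _ = p n / ν (B n) * (c n * ν (B n)) := by
        rw [mul_left_comm, ENNReal.div_mul_cancel (hB0 n).ne' (hBtop n).ne]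
        simp only [p, c, ENNReal.coe_mul, ENNReal.coe_pow, ENNReal.coe_natCast, ENNReal.coe_ofNat]
        rw [mul_assoc, ← mul_pow, ENNReal.mul_inv_cancel two_ne_zero ofNat_ne_top, one_pow,
          mul_one]
      _ ≤ p n / ν (B n) * ∫⁻ x in B n, w x ∂μ := by gcongr
      _ = ∫⁻ x in B n, w x * (p n / ν (B n)) ∂μ := by rw [lintegral_mul_const _ hw, mul_comm]
      _ = ∫⁻ x, w x * (B n).indicator (fun _ => p n / ν (B n)) x ∂μ := by
        simp_rw [← Set.indicator_mul_right]
        rw [lintegral_indicator (hBm n)]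
      _ ≤ ∫⁻ x, w x * g x ∂μ := by
        gcongr with x
        exact ENNReal.le_tsum (f := fun n => (B n).indicator (fun _ => p n / ν (B n)) x) n

theorem exists_ae_le_const_mul_of_lintegral_mul_lt_top [SigmaFinite μ] (hv : Measurable v)
    (hw : Measurable w) (hv0 : ∀ᵐ x ∂μ, v x ≠ 0) (hvtop : ∀ᵐ x ∂μ, v x ≠ ∞)
    (h : ∀ g : X → ℝ≥0, Measurable g →
      ∫⁻ x, v x * g x ∂μ < ∞ → ∫⁻ x, w x * g x ∂μ < ∞) :
    ∃ c : ℝ≥0, ∀ᵐ x ∂μ, w x ≤ c * v x := by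
  by_contra hc
  simp only [not_exists] at hc
  obtain ⟨g, hg, hvg, hwg⟩ := exists_lintegral_mul_lt_top_and_eq_top hv hw hv0 hvtop hc
  have hgtop : ∀ᵐ x ∂μ, g x ≠ ∞ := by
    filter_upwards [ae_lt_top (hv.mul hg) hvg.ne, hv0] with x hx hx0 hgx
    simp [hgx, hx0] at hx
  have hg_toNNReal (f : X → ℝ≥0∞) : ∫⁻ x, f x * (g x).toNNReal ∂μ = ∫⁻ x, f x * g x ∂μ :=
    lintegral_congr_ae <| hgtop.mono fun x hx => by simp only [ENNReal.coe_toNNReal hx]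
  have hwg' := h (fun x => (g x).toNNReal) hg.ennreal_toNNReal
  rw [hg_toNNReal, hg_toNNReal] at hwg'
  exact (hwg' hvg).ne hwg

end WeightedIntegrability

section WeightedComposition

variable {X : Type*} [MeasurableSpace X] {μ : Measure X} {u : X → ℂ} {φ : X → X}

theorem lintegral_rnDeriv_map_withDensity_mul_s4 [SigmaFinite μ] (hφ : Measurable φ)
    (hns : μ.map φ ≪ μ) {ρ h : X → ℝ≥0∞} (hρ : Measurable ρ) (hh : Measurable h) :
    ∫⁻ x, ((μ.withDensity ρ).map φ).rnDeriv μ x * h x ∂μ = ∫⁻ x, ρ x * h (φ x) ∂μ := by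
  have hac : (μ.withDensity ρ).map φ ≪ μ :=
    ((withDensity_absolutelyContinuous μ ρ).map hφ).trans hns
  calc ∫⁻ x, ((μ.withDensity ρ).map φ).rnDeriv μ x * h x ∂μ
      = ∫⁻ x, h x ∂μ.withDensity (((μ.withDensity ρ).map φ).rnDeriv μ) :=
        (lintegral_withDensity_eq_lintegral_mul _ (Measure.measurable_rnDeriv _ _) hh).symm
    _ = ∫⁻ x, h (φ x) ∂μ.withDensity ρ := by
        rw [Measure.withDensity_rnDeriv_eq _ _ hac, lintegral_map hh hφ]
    _ = ∫⁻ x, ρ x * h (φ x) ∂μ := lintegral_withDensity_eq_lintegral_mul _ hρ (hh.comp hφ)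

theorem lintegral_rnDeriv_mul_enorm_sq [SigmaFinite μ] (hu : Measurable u) (hφ : Measurable φ)
    (hns : μ.map φ ≪ μ) {ρ : X → ℝ≥0∞} (hρ : Measurable ρ) {f : X → ℂ} (hf : Measurable f) :
    ∫⁻ x, ((μ.withDensity fun x => ρ x * (‖u x‖₊ : ℝ≥0∞) ^ 2).map φ).rnDeriv μ x * ‖f x‖ₑ ^ 2 ∂μ
      = ∫⁻ x, ρ x * ‖u x * f (φ x)‖ₑ ^ 2 ∂μ := by
  rw [lintegral_rnDeriv_map_withDensity_mul_s4 hφ hns (by fun_prop) (by fun_prop)]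
  simp only [← enorm_eq_nnnorm, enorm_mul, mul_pow, mul_assoc]

theorem ae_eq_comp_of_ae_eq (hφ : Measurable φ) (hns : μ.map φ ≪ μ) {f g : X → ℂ}
    (hfg : f =ᵐ[μ] g) : (fun x => u x * f (φ x)) =ᵐ[μ] fun x => u x * g (φ x) :=
  Filter.EventuallyEq.rfl.mul (Measure.QuasiMeasurePreserving.ae_eq ⟨hφ, hns⟩ hfg)

variable {J : ℕ → X → ℝ≥0∞}

theorem measurable_of_rnDeriv_recursion (hJ0 : J 0 = fun _ => 1)
    (hJ : ∀ n : ℕ, J (n + 1) =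
      ((μ.withDensity fun x => J n x * (‖u x‖₊ : ℝ≥0∞) ^ 2).map φ).rnDeriv μ) (n : ℕ) :
    Measurable (J n) := by
  cases n with
  | zero => simp [hJ0]
  | succ n => rw [hJ n]; exact Measure.measurable_rnDeriv _ _

theorem lintegral_enorm_sq_comp [SigmaFinite μ] (hu : Measurable u) (hφ : Measurable φ)
    (hns : μ.map φ ≪ μ) (hJ0 : J 0 = fun _ => 1)
    (hJ : ∀ n : ℕ, J (n + 1) =
      ((μ.withDensity fun x => J n x * (‖u x‖₊ : ℝ≥0∞) ^ 2).map φ).rnDeriv μ)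
    {f : X → ℂ} (hf : Measurable f) :
    ∫⁻ x, ‖u x * f (φ x)‖ₑ ^ 2 ∂μ = ∫⁻ x, J 1 x * ‖f x‖ₑ ^ 2 ∂μ := by
  rw [hJ 0, lintegral_rnDeriv_mul_enorm_sq hu hφ hns
    (measurable_of_rnDeriv_recursion hJ0 hJ 0) hf, hJ0]
  simp only [one_mul]

theorem lintegral_enorm_sq_comp_comp [SigmaFinite μ] (hu : Measurable u) (hφ : Measurable φ)
    (hns : μ.map φ ≪ μ) (hJ0 : J 0 = fun _ => 1)
    (hJ : ∀ n : ℕ, J (n + 1) =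
      ((μ.withDensity fun x => J n x * (‖u x‖₊ : ℝ≥0∞) ^ 2).map φ).rnDeriv μ)
    {f : X → ℂ} (hf : Measurable f) :
    ∫⁻ x, ‖u x * (u (φ x) * f (φ (φ x)))‖ₑ ^ 2 ∂μ = ∫⁻ x, J 2 x * ‖f x‖ₑ ^ 2 ∂μ := by
  rw [hJ 1, lintegral_rnDeriv_mul_enorm_sq hu hφ hns
    (measurable_of_rnDeriv_recursion hJ0 hJ 1) hf]
  exact lintegral_enorm_sq_comp hu hφ hns hJ0 hJ (f := fun x => u x * f (φ x)) (by fun_prop)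

theorem memLp_and_memLp_comp_iff [SigmaFinite μ] (hu : Measurable u) (hφ : Measurable φ)
    (hns : μ.map φ ≪ μ) (hJ0 : J 0 = fun _ => 1)
    (hJ : ∀ n : ℕ, J (n + 1) =
      ((μ.withDensity fun x => J n x * (‖u x‖₊ : ℝ≥0∞) ^ 2).map φ).rnDeriv μ)
    {f : X → ℂ} (hf : Measurable f) :
    MemLp f 2 μ ∧ MemLp (fun x => u x * f (φ x)) 2 μ ↔
      ∫⁻ x, (1 + J 1 x) * ‖f x‖ₑ ^ 2 ∂μ < ∞ := by
  rw [memLp_two_iff_lintegral_enorm_sq_lt_top hf.aestronglyMeasurable,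
    memLp_two_iff_lintegral_enorm_sq_lt_top (f := fun x => u x * f (φ x)) (by fun_prop),
    lintegral_enorm_sq_comp hu hφ hns hJ0 hJ hf]
  simp_rw [add_mul, one_mul]
  rw [lintegral_add_left (by fun_prop), ENNReal.add_lt_top]

theorem memLp_comp_comp_iff [SigmaFinite μ] (hu : Measurable u) (hφ : Measurable φ)
    (hns : μ.map φ ≪ μ) (hJ0 : J 0 = fun _ => 1)
    (hJ : ∀ n : ℕ, J (n + 1) =
      ((μ.withDensity fun x => J n x * (‖u x‖₊ : ℝ≥0∞) ^ 2).map φ).rnDeriv μ)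
    {f : X → ℂ} (hf : Measurable f) :
    MemLp (fun x => u x * (u (φ x) * f (φ (φ x)))) 2 μ ↔
      ∫⁻ x, J 2 x * ‖f x‖ₑ ^ 2 ∂μ < ∞ := by
  rw [memLp_two_iff_lintegral_enorm_sq_lt_top (by fun_prop),
    lintegral_enorm_sq_comp_comp hu hφ hns hJ0 hJ hf]

theorem memLp_comp_comp_of_ae_le [SigmaFinite μ] (hu : Measurable u) (hφ : Measurable φ)
    (hns : μ.map φ ≪ μ) (hJ0 : J 0 = fun _ => 1)
    (hJ : ∀ n : ℕ, J (n + 1) =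
      ((μ.withDensity fun x => J n x * (‖u x‖₊ : ℝ≥0∞) ^ 2).map φ).rnDeriv μ)
    {c : ℝ≥0} (hc : ∀ᵐ x ∂μ, J 2 x ≤ c * (1 + J 1 x)) {f : X → ℂ} (hf : MemLp f 2 μ)
    (hTf : MemLp (fun x => u x * f (φ x)) 2 μ) :
    MemLp (fun x => u x * (u (φ x) * f (φ (φ x)))) 2 μ := by
  obtain ⟨f', hf'm, hff'⟩ := hf.1.aemeasurable
  have hTff' := ae_eq_comp_of_ae_eq (u := u) hφ hns hff'
  rw [memLp_congr_ae (ae_eq_comp_of_ae_eq hφ hns hTff'),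
    memLp_comp_comp_iff hu hφ hns hJ0 hJ hf'm]
  have hf'D := (memLp_and_memLp_comp_iff hu hφ hns hJ0 hJ hf'm).1
    ⟨(memLp_congr_ae hff').1 hf, (memLp_congr_ae hTff').1 hTf⟩
  calc ∫⁻ x, J 2 x * ‖f' x‖ₑ ^ 2 ∂μ
      ≤ ∫⁻ x, c * ((1 + J 1 x) * ‖f' x‖ₑ ^ 2) ∂μ :=
        lintegral_mono_ae <| hc.mono fun x hx => by rw [← mul_assoc]; gcongr
    _ = c * ∫⁻ x, (1 + J 1 x) * ‖f' x‖ₑ ^ 2 ∂μ := lintegral_const_mul' _ _ coe_ne_top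
    _ < ∞ := mul_lt_top coe_lt_top hf'D

end WeightedComposition

theorem stmt4_general
    {X : Type*} [MeasurableSpace X] (μ : Measure X) [SigmaFinite μ]
    (u : X → ℂ) (hu : Measurable u)
    (φ : X → X) (hφ : Measurable φ)
    (hns : (μ.map φ) ≪ μ)
    (J : ℕ → X → ℝ≥0∞)
    (hJ0 : J 0 = fun _ => 1)
    (hJ : ∀ n : ℕ, J (n + 1) =
      ((μ.withDensity fun x => J n x * (‖u x‖₊ : ℝ≥0∞) ^ 2).map φ).rnDeriv μ)
    (hfin : ∀ n, ∀ᵐ x ∂μ, J n x < ∞)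
    (D : Set (X → ℂ))
    (hD : D = {f | MemLp f 2 μ ∧ MemLp (fun x => u x * f (φ x)) 2 μ}) :
    (∀ f ∈ D, (fun x => u x * f (φ x)) ∈ D) ↔
      ∃ c : ℝ≥0, 0 < c ∧ ∀ᵐ x ∂μ, J 2 x ≤ c * (1 + J 1 x) := by
  have hJm := measurable_of_rnDeriv_recursion hJ0 hJ
  subst hD
  constructor
  · intro hinv
    have htest (g : X → ℝ≥0) (hg : Measurable g)
        (hvg : ∫⁻ x, (1 + J 1 x) * g x ∂μ < ∞) : ∫⁻ x, J 2 x * g x ∂μ < ∞ := by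
      set f : X → ℂ := fun x => (NNReal.sqrt (g x) : ℝ)
      have hfg (x : X) : ‖f x‖ₑ ^ 2 = g x := by
        rw [← enorm_pow, ← Complex.ofReal_pow, ← NNReal.coe_pow, NNReal.sq_sqrt]
        simp [enorm_eq_nnnorm]
      have hf : Measurable f := by fun_prop
      have hfD := (memLp_and_memLp_comp_iff hu hφ hns hJ0 hJ hf).2 (by simpa only [hfg])
      simpa only [hfg] using (memLp_comp_comp_iff hu hφ hns hJ0 hJ hf).1 (hinv f hfD).2
    obtain ⟨c, hc⟩ := exists_ae_le_const_mul_of_lintegral_mul_lt_top (v := fun x => 1 + J 1 x)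
      (by fun_prop) (hJm 2) (ae_of_all _ fun _ => by simp)
      ((hfin 1).mono fun _ hx => by simpa using hx.ne) htest
    exact ⟨c + 1, by positivity, hc.mono fun x hx => hx.trans (by gcongr; simp)⟩
  · rintro ⟨c, -, hc⟩ f ⟨hf, hTf⟩
    exact ⟨hTf, memLp_comp_comp_of_ae_le hu hφ hns hJ0 hJ hc hf hTf⟩

/-- Proposition 2.2: if `D(uC_φ)` is dense in `L²(μ)` then `uC_φ` maps its domain
into itself iff there is `c > 0` with `J₂ ≤ c(1 + J₁)` a.e. -/
theorem stmt4
    {X : Type*} [MeasurableSpace X] (μ : Measure X) [SigmaFinite μ]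
    (u : X → ℂ) (hu : Measurable u)
    (φ : X → X) (hφ : Measurable φ)
    (hns : (μ.map φ) ≪ μ)
    (J : ℕ → X → ℝ≥0∞)
    (hJ0 : J 0 = fun _ => 1)
    (hJ : ∀ n : ℕ, J (n + 1) =
      ((μ.withDensity fun x => J n x * (‖u x‖₊ : ℝ≥0∞) ^ 2).map φ).rnDeriv μ)
    (hfin : ∀ n, ∀ᵐ x ∂μ, J n x < ∞)
    (D : Set (X → ℂ))
    (hD : D = {f | MemLp f 2 μ ∧ MemLp (fun x => u x * f (φ x)) 2 μ})
    (hdense : Dense {f : Lp ℂ 2 μ |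
        MemLp (fun x => u x * (f : X → ℂ) (φ x)) 2 μ}) :
    (∀ f ∈ D, (fun x => u x * f (φ x)) ∈ D) ↔
      ∃ c : ℝ≥0, 0 < c ∧ ∀ᵐ x ∂μ, J 2 x ≤ c * (1 + J 1 x) :=
  stmt4_general μ u hu φ hφ hns J hJ0 hJ hfin D hD
end

section
/- Let M_u be the multiplication operator f ↦ u·f on L²(μ) with domain D(M_u) = {f ∈ L²(μ) : u·f ∈ L²(μ)}, assumed densely defined. Then M_u maps its domain into itself if and only if there exists c > 0 such that |u|⁴ ≤ c(1 + |u|²) μ-a.e. -/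
/-!
The bound `‖u‖⁴ ≤ c (1 + ‖u‖²)` a.e. says exactly that `u` is essentially bounded, and a bounded
`u` maps the domain into itself. Conversely, if `u` is essentially unbounded, infinitely many level
sets `{⌊‖u‖⌋ = m}` are non-null. By σ-finiteness each of them contains a piece of finite positive
measure; a function `f` that is constant on each piece, with `∫ |f|² = (m + 1)⁻⁴` on the `m`-th
piece, has `f` and `u f` in `L²`, while `u (u f)` has mass at least `m⁴ (m + 1)⁻⁴` on infinitely
many pieces.
-/

open MeasureTheory Filter ENNReal NNReal

theorem sq_le_add_one_of_pow_four_le {t c : ℝ} (h : t ^ 4 ≤ c * (1 + t ^ 2)) : t ^ 2 ≤ c + 1 := by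
  nlinarith [sq_nonneg (t ^ 2 - c - 1), sq_nonneg t]

theorem summable_inv_add_one_sq : Summable fun m : ℕ => (((m : ℝ≥0) + 1) ^ 2)⁻¹ := by
  have h : Summable fun m : ℕ => (((m + 1 : ℕ) : ℝ) ^ 2)⁻¹ :=
    (_root_.summable_nat_add_iff 1).2 (Real.summable_nat_pow_inv.2 one_lt_two)
  exact NNReal.summable_coe.1 (by simpa using h)

theorem inv_sixteen_le_pow_four_mul_inv {m : ℕ} (hm : 1 ≤ m) :
    (16 : ℝ≥0)⁻¹ ≤ (m : ℝ≥0) ^ 4 * (((m : ℝ≥0) + 1) ^ 4)⁻¹ := by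
  rw [← NNReal.coe_le_coe]
  push_cast
  have : (1 : ℝ) ≤ m := by exact_mod_cast hm
  rw [← div_eq_mul_inv, le_div_iff₀ (by positivity)]
  have h2m : (m : ℝ) + 1 ≤ 2 * m := by linarith
  nlinarith [pow_le_pow_left₀ (by positivity) h2m 4]

theorem exists_tsum_ne_top_and_tsum_eq_top (ν : ℕ → ℝ≥0∞) (hν : ∀ m, ν m ≠ ∞)
    (hI : {m | ν m ≠ 0}.Infinite) :
    ∃ a : ℕ → ℝ≥0, ∑' m : ℕ, ((m : ℝ≥0∞) + 1) ^ 2 * a m ^ 2 * ν m ≠ ∞ ∧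
      ∑' m : ℕ, (m : ℝ≥0∞) ^ 4 * a m ^ 2 * ν m = ∞ := by
  lift ν to ℕ → ℝ≥0 using hν
  simp only [ne_eq, ENNReal.coe_eq_zero] at hI
  set a : ℕ → ℝ≥0 := fun m => NNReal.sqrt ((((m : ℝ≥0) + 1) ^ 4 * ν m)⁻¹)
  have ha : ∀ m, a m ^ 2 * ν m = (((m : ℝ≥0) + 1) ^ 4 * ν m)⁻¹ * ν m := fun m => by
    rw [NNReal.sq_sqrt]
  have hmass_le : ∀ m, a m ^ 2 * ν m ≤ (((m : ℝ≥0) + 1) ^ 4)⁻¹ := fun m => by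
    rcases eq_or_ne (ν m) 0 with h | h
    · simp [h]
    · rw [ha, mul_inv, mul_assoc, inv_mul_cancel₀ h, mul_one]
  have hmass_eq : ∀ m, ν m ≠ 0 → a m ^ 2 * ν m = (((m : ℝ≥0) + 1) ^ 4)⁻¹ := fun m h => by
    rw [ha, mul_inv, mul_assoc, inv_mul_cancel₀ h, mul_one]
  refine ⟨a, ?_, ?_⟩
  · have hcoe : ∀ m : ℕ, ((m : ℝ≥0∞) + 1) ^ 2 * (a m : ℝ≥0∞) ^ 2 * ν m =
        ((((m : ℝ≥0) + 1) ^ 2 * (a m ^ 2 * ν m) : ℝ≥0) : ℝ≥0∞) := fun m => by push_cast; ring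
    simp_rw [hcoe]
    refine ENNReal.tsum_coe_ne_top_iff_summable.2
      (NNReal.summable_of_le (fun m => ?_) summable_inv_add_one_sq)
    calc ((m : ℝ≥0) + 1) ^ 2 * (a m ^ 2 * ν m)
        ≤ ((m : ℝ≥0) + 1) ^ 2 * (((m : ℝ≥0) + 1) ^ 4)⁻¹ := by gcongr; exact hmass_le m
      _ = (((m : ℝ≥0) + 1) ^ 2)⁻¹ := by field_simp
  · have hcoe : ∀ m : ℕ, (m : ℝ≥0∞) ^ 4 * (a m : ℝ≥0∞) ^ 2 * ν m =
        (((m : ℝ≥0) ^ 4 * (a m ^ 2 * ν m) : ℝ≥0) : ℝ≥0∞) := fun m => by push_cast; ring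
    simp_rw [hcoe]
    refine not_ne_iff.1 fun hsum => ?_
    have hsmall := (tendsto_order.1 (NNReal.tendsto_atTop_zero_of_summable
      (ENNReal.tsum_coe_ne_top_iff_summable.1 hsum))).2 (16 : ℝ≥0)⁻¹ (by positivity)
    have hbig : ∃ᶠ m in atTop, ν m ≠ 0 ∧ 1 ≤ m :=
      (Nat.frequently_atTop_iff_infinite.2 hI).and_eventually (eventually_ge_atTop 1)
    obtain ⟨m, ⟨hνm, hm⟩, hlt⟩ := (hbig.and_eventually hsmall).exists
    rw [hmass_eq m hνm] at hlt
    exact (inv_sixteen_le_pow_four_mul_inv hm).not_gt hlt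

section Measure

variable {X : Type*}

theorem enorm_pow_mul_indicator_sq {𝕜 : Type*} [RCLike 𝕜] (u : X → 𝕜) (G : Set X)
    (g : X → ℝ≥0) (k : ℕ) (x : X) :
    ‖u x ^ k * G.indicator (fun x => ((g x : ℝ) : 𝕜)) x‖ₑ ^ 2 =
      G.indicator (fun x => ‖u x‖ₑ ^ (2 * k) * g x ^ 2) x := by
  have hg : ‖((g x : ℝ) : 𝕜)‖ₑ = g x := by
    rw [← ofReal_norm, RCLike.norm_ofReal, NNReal.abs_eq, ENNReal.ofReal_coe_nnreal]
  by_cases hx : x ∈ G <;> simp [hx, hg, pow_mul', mul_pow]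

variable [MeasurableSpace X] {μ : Measure X}

theorem memLp_two_iff_lintegral_enorm_sq_ne_top {E : Type*} [NormedAddCommGroup E] {f : X → E}
    (hf : AEStronglyMeasurable f μ) : MemLp f 2 μ ↔ ∫⁻ x, ‖f x‖ₑ ^ 2 ∂μ ≠ ∞ := by
  rw [MemLp, and_iff_right hf,
    eLpNorm_lt_top_iff_lintegral_rpow_enorm_lt_top two_ne_zero ofNat_ne_top, lt_top_iff_ne_top]
  simp

theorem exists_pos_ae_pow_four_le_iff {E : Type*} [SeminormedAddGroup E] (u : X → E) :
    (∃ c : ℝ, 0 < c ∧ ∀ᵐ x ∂μ, ‖u x‖ ^ 4 ≤ c * (1 + ‖u x‖ ^ 2)) ↔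
      ∃ C : ℝ, ∀ᵐ x ∂μ, ‖u x‖ ≤ C := by
  constructor
  · rintro ⟨c, -, hc⟩
    exact ⟨√(c + 1), hc.mono fun x hx =>
      Real.le_sqrt_of_sq_le (sq_le_add_one_of_pow_four_le hx)⟩
  · rintro ⟨C, hC⟩
    refine ⟨C ^ 2 + 1, by positivity, hC.mono fun x hx => ?_⟩
    have hsq : ‖u x‖ ^ 2 ≤ C ^ 2 := pow_le_pow_left₀ (norm_nonneg _) hx 2
    nlinarith [sq_nonneg ‖u x‖]

theorem MemLp.mul_of_ae_norm_le {𝕜 : Type*} [NormedRing 𝕜] {p : ℝ≥0∞} {u g : X → 𝕜}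
    (hu : AEStronglyMeasurable u μ) {C : ℝ} (hC : ∀ᵐ x ∂μ, ‖u x‖ ≤ C) (hg : MemLp g p μ) :
    MemLp (fun x => u x * g x) p μ :=
  hg.of_le_mul (hu.mul hg.1) (hC.mono fun _ hx =>
    (norm_mul_le _ _).trans (mul_le_mul_of_nonneg_right hx (norm_nonneg _)))

theorem lintegral_comp_eq_tsum_mul_measure_preimage {φ : X → ℕ} (hφ : Measurable φ)
    (F : ℕ → ℝ≥0∞) : ∫⁻ x, F (φ x) ∂μ = ∑' m, F m * μ (φ ⁻¹' {m}) := by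
  rw [← lintegral_map measurable_from_nat hφ, lintegral_countable']
  simp_rw [Measure.map_apply hφ (measurableSet_singleton _)]

theorem exists_ae_le_of_finite_setOf_measure_preimage_ne_zero {φ : X → ℕ}
    (h : {m | μ (φ ⁻¹' {m}) ≠ 0}.Finite) : ∃ N, ∀ᵐ x ∂μ, φ x ≤ N := by
  obtain ⟨N, hN⟩ := h.bddAbove
  have hnull : μ (φ ⁻¹' {m | μ (φ ⁻¹' {m}) ≠ 0}ᶜ) = 0 :=
    (measure_preimage_eq_zero_iff_of_countable (Set.to_countable _)).2 fun m hm => not_not.1 hm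
  exact ⟨N, (measure_eq_zero_iff_ae_notMem.1 hnull).mono fun x hx => hN (not_not.1 hx)⟩

theorem exists_measurableSet_measure_preimage_inter_ne_top [SigmaFinite μ] {φ : X → ℕ}
    (hφ : Measurable φ) : ∃ G, MeasurableSet G ∧ (∀ m, μ (φ ⁻¹' {m} ∩ G) ≠ ∞) ∧
      ∀ m, μ (φ ⁻¹' {m}) ≠ 0 → μ (φ ⁻¹' {m} ∩ G) ≠ 0 := by
  have hj : ∀ m, ∃ j, μ (φ ⁻¹' {m}) ≠ 0 → μ (φ ⁻¹' {m} ∩ spanningSets μ j) ≠ 0 := fun m => by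
    by_contra! h
    refine (h 0).1 (measure_mono_null (fun x hx => ?_) (measure_iUnion_null fun j => (h j).2))
    simpa [← Set.inter_iUnion, iUnion_spanningSets] using hx
  choose j hj using hj
  have hfiber : ∀ m, φ ⁻¹' {m} ∩ ⋃ m', φ ⁻¹' {m'} ∩ spanningSets μ (j m') =
      φ ⁻¹' {m} ∩ spanningSets μ (j m) := fun m => by
    ext x; simp +contextual
  refine ⟨⋃ m, φ ⁻¹' {m} ∩ spanningSets μ (j m),
    .iUnion fun m => (hφ (measurableSet_singleton m)).inter (measurableSet_spanningSets μ _),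
    fun m => ?_, fun m => ?_⟩
  · rw [hfiber]
    exact ((measure_mono Set.inter_subset_right).trans_lt (measure_spanningSets_lt_top μ _)).ne
  · rw [hfiber]
    exact hj m

variable {𝕜 : Type*} [RCLike 𝕜] {u : X → 𝕜}

theorem lintegral_enorm_pow_mul_indicator_sq_le (hu : Measurable u) {G : Set X}
    (hG : MeasurableSet G) (a : ℕ → ℝ≥0) (k : ℕ) :
    ∫⁻ x, ‖u x ^ k * G.indicator (fun x => ((a ⌊‖u x‖⌋₊ : ℝ) : 𝕜)) x‖ₑ ^ 2 ∂μ ≤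
      ∑' m : ℕ, ((m : ℝ≥0∞) + 1) ^ (2 * k) * a m ^ 2 * μ ((fun x => ⌊‖u x‖⌋₊) ⁻¹' {m} ∩ G) := by
  have hφ : Measurable fun x => ⌊‖u x‖⌋₊ := hu.norm.nat_floor
  simp_rw [enorm_pow_mul_indicator_sq, lintegral_indicator hG]
  calc ∫⁻ x in G, ‖u x‖ₑ ^ (2 * k) * a ⌊‖u x‖⌋₊ ^ 2 ∂μ
      ≤ ∫⁻ x in G, ((⌊‖u x‖⌋₊ : ℝ≥0∞) + 1) ^ (2 * k) * a ⌊‖u x‖⌋₊ ^ 2 ∂μ := by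
        refine lintegral_mono fun x => ?_
        gcongr
        rw [← ofReal_norm, ← ENNReal.ofReal_natCast, ← ENNReal.ofReal_one,
          ← ENNReal.ofReal_add (by positivity) zero_le_one]
        exact ENNReal.ofReal_le_ofReal (Nat.lt_floor_add_one _).le
    _ = _ := by
        rw [lintegral_comp_eq_tsum_mul_measure_preimage hφ
          (fun m => ((m : ℝ≥0∞) + 1) ^ (2 * k) * a m ^ 2)]
        simp_rw [Measure.restrict_apply (hφ (measurableSet_singleton _))]

theorem le_lintegral_enorm_pow_mul_indicator_sq (hu : Measurable u) {G : Set X}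
    (hG : MeasurableSet G) (a : ℕ → ℝ≥0) (k : ℕ) :
    ∑' m : ℕ, (m : ℝ≥0∞) ^ (2 * k) * a m ^ 2 * μ ((fun x => ⌊‖u x‖⌋₊) ⁻¹' {m} ∩ G) ≤
      ∫⁻ x, ‖u x ^ k * G.indicator (fun x => ((a ⌊‖u x‖⌋₊ : ℝ) : 𝕜)) x‖ₑ ^ 2 ∂μ := by
  have hφ : Measurable fun x => ⌊‖u x‖⌋₊ := hu.norm.nat_floor
  simp_rw [enorm_pow_mul_indicator_sq, lintegral_indicator hG]
  calc _ = ∫⁻ x in G, (⌊‖u x‖⌋₊ : ℝ≥0∞) ^ (2 * k) * a ⌊‖u x‖⌋₊ ^ 2 ∂μ := by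
        rw [lintegral_comp_eq_tsum_mul_measure_preimage hφ
          (fun m => (m : ℝ≥0∞) ^ (2 * k) * a m ^ 2)]
        simp_rw [Measure.restrict_apply (hφ (measurableSet_singleton _))]
    _ ≤ ∫⁻ x in G, ‖u x‖ₑ ^ (2 * k) * a ⌊‖u x‖⌋₊ ^ 2 ∂μ := by
        refine lintegral_mono fun x => ?_
        gcongr
        rw [← ofReal_norm, ← ENNReal.ofReal_natCast]
        exact ENNReal.ofReal_le_ofReal (Nat.floor_le (norm_nonneg _))

theorem exists_memLp_mul_not_memLp_mul_mul [SigmaFinite μ] (hu : Measurable u)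
    (hunb : ¬ ∃ C : ℝ, ∀ᵐ x ∂μ, ‖u x‖ ≤ C) :
    ∃ f : X → 𝕜, MemLp f 2 μ ∧ MemLp (fun x => u x * f x) 2 μ ∧
      ¬ MemLp (fun x => u x * (u x * f x)) 2 μ := by
  have hφ : Measurable fun x => ⌊‖u x‖⌋₊ := hu.norm.nat_floor
  obtain ⟨G, hG, hGfin, hGpos⟩ := exists_measurableSet_measure_preimage_inter_ne_top (μ := μ) hφ
  have hinf : {m | μ ((fun x => ⌊‖u x‖⌋₊) ⁻¹' {m} ∩ G) ≠ 0}.Infinite := by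
    refine Set.Infinite.mono hGpos fun hfin => hunb ?_
    obtain ⟨N, hN⟩ := exists_ae_le_of_finite_setOf_measure_preimage_ne_zero hfin
    refine ⟨N + 1, hN.mono fun x hx => (Nat.lt_floor_add_one _).le.trans ?_⟩
    exact_mod_cast Nat.add_le_add_right hx 1
  obtain ⟨a, hfinite, hinfinite⟩ := exists_tsum_ne_top_and_tsum_eq_top _ hGfin hinf
  set f : X → 𝕜 := G.indicator fun x => ((a ⌊‖u x‖⌋₊ : ℝ) : 𝕜)
  have hf : Measurable f :=
    (RCLike.measurable_ofReal.comp
      (measurable_coe_nnreal_real.comp (measurable_from_nat.comp hφ))).indicator hG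
  have hmemLp : ∀ k ≤ 1, MemLp (fun x => u x ^ k * f x) 2 μ := fun k hk => by
    rw [memLp_two_iff_lintegral_enorm_sq_ne_top (by fun_prop : Measurable _).aestronglyMeasurable]
    refine ne_top_of_le_ne_top hfinite ((lintegral_enorm_pow_mul_indicator_sq_le hu hG a k).trans
      (ENNReal.tsum_le_tsum fun m => ?_))
    gcongr
    exacts [le_add_self, by omega]
  have huuf : (fun x => u x * (u x * f x)) = fun x => u x ^ 2 * f x := by ext; ring
  refine ⟨f, by simpa using hmemLp 0 zero_le_one, by simpa using hmemLp 1 le_rfl, fun h => ?_⟩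
  rw [huuf, memLp_two_iff_lintegral_enorm_sq_ne_top
    (by fun_prop : Measurable _).aestronglyMeasurable] at h
  exact h (top_le_iff.1 (hinfinite ▸ le_lintegral_enorm_pow_mul_indicator_sq hu hG a 2))

end Measure

theorem stmt6_general
    {X : Type*} [MeasurableSpace X] (μ : Measure X) [SigmaFinite μ]
    (u : X → ℂ) (hu : Measurable u)
    (D : Set (X → ℂ))
    (hD : D = {f | MemLp f 2 μ ∧ MemLp (fun x => u x * f x) 2 μ}) :
    (∀ f ∈ D, (fun x => u x * f x) ∈ D) ↔
      ∃ c : ℝ, 0 < c ∧ ∀ᵐ x ∂μ, ‖u x‖ ^ 4 ≤ c * (1 + ‖u x‖ ^ 2) := by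
  subst hD
  rw [exists_pos_ae_pow_four_le_iff]
  constructor
  · intro hinv
    by_contra hunb
    obtain ⟨f, hf, huf, huuf⟩ := exists_memLp_mul_not_memLp_mul_mul hu hunb
    exact huuf (hinv f ⟨hf, huf⟩).2
  · rintro ⟨C, hC⟩ f hf
    exact ⟨hf.2, MemLp.mul_of_ae_norm_le hu.aestronglyMeasurable hC hf.2⟩

/-- Corollary 2.5: if `D(M_u)` is dense in `L²(μ)` then `M_u` maps its domain into
itself iff there is `c > 0` with `|u|⁴ ≤ c(1 + |u|²)` a.e. -/
theorem stmt6
    {X : Type*} [MeasurableSpace X] (μ : Measure X) [SigmaFinite μ]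
    (u : X → ℂ) (hu : Measurable u)
    (D : Set (X → ℂ))
    (hD : D = {f | MemLp f 2 μ ∧ MemLp (fun x => u x * f x) 2 μ})
    (hdense : Dense {f : Lp ℂ 2 μ | MemLp (fun x => u x * (f : X → ℂ) x) 2 μ}) :
    (∀ f ∈ D, (fun x => u x * f x) ∈ D) ↔
      ∃ c : ℝ, 0 < c ∧ ∀ᵐ x ∂μ, ‖u x‖ ^ 4 ≤ c * (1 + ‖u x‖ ^ 2) :=
  stmt6_general μ u hu D hD
end

section
/- Under the hypotheses that D((uC_φ)²) is dense in L²(μ) and uC_φ is 2-expansive, the sequence (J_k) is nondecreasing: J_k ≥ J_{k-1} μ-a.e. for all k ≥ 1. -/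
open MeasureTheory ENNReal

/-!
By change of variables, `‖(uC_φ)^k f‖² = ∫ J_k |f|² dμ`, so testing 2-expansivity on indicator
functions of sets of finite measure on which `J_1` and `J_2` are bounded gives
`1 + J_2 ≤ 2 J_1` a.e. Since `J_{k+1}` is the image of `J_k` under the positive linear map
`h ↦ d(φ_*(h |u|² μ))/dμ`, the concavity inequality `J_k + J_{k+2} ≤ 2 J_{k+1}` then holds for
every `k`, and a nonnegative concave sequence is nondecreasing.
-/

theorem monotone_of_nonneg_of_add_le_two_mul {a : ℕ → ℝ} (h0 : ∀ k, 0 ≤ a k)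
    (hc : ∀ k, a k + a (k + 2) ≤ 2 * a (k + 1)) : Monotone a := by
  have hdiff : Antitone fun k => a (k + 1) - a k :=
    antitone_nat_of_succ_le fun k => by linarith [hc k]
  refine monotone_nat_of_le_succ fun k => ?_
  by_contra! hk
  have hlinear : ∀ n : ℕ, a (k + n) ≤ a k + n * (a (k + 1) - a k) := by
    intro n
    induction n with
    | zero => simp
    | succ n ih =>
      have := hdiff (Nat.le_add_right k n)
      rw [← add_assoc]
      push_cast
      linarith
  obtain ⟨n, hn⟩ := exists_nat_gt (a k / (a k - a (k + 1)))
  rw [div_lt_iff₀ (by linarith)] at hn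
  nlinarith [hlinear n, h0 (k + n)]

theorem ENNReal.monotone_of_add_le_two_mul {a : ℕ → ℝ≥0∞} (ha : ∀ k, a k ≠ ∞)
    (hc : ∀ k, a k + a (k + 2) ≤ 2 * a (k + 1)) : Monotone a := by
  have hreal : Monotone fun k => (a k).toReal := by
    refine monotone_of_nonneg_of_add_le_two_mul (fun k => toReal_nonneg) fun k => ?_
    have := (toReal_le_toReal (add_ne_top.2 ⟨ha k, ha (k + 2)⟩)
      (mul_ne_top ofNat_ne_top (ha (k + 1)))).2 (hc k)
    rwa [toReal_add (ha k) (ha (k + 2)), toReal_mul, toReal_ofNat] at this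
  exact fun i j hij => (toReal_le_toReal (ha i) (ha j)).1 (hreal hij)

section Integration

variable {α : Type*} [MeasurableSpace α] {μ : Measure α}

theorem ae_le_of_forall_setLIntegral_le_of_ae_lt_top [SigmaFinite μ] {f g w : α → ℝ≥0∞}
    (hf : Measurable f) (hw : Measurable w) (hw_fin : ∀ᵐ x ∂μ, w x < ∞)
    (h : ∀ s, MeasurableSet s → μ s < ∞ → ∫⁻ x in s, w x ∂μ < ∞ →
      ∫⁻ x in s, f x ∂μ ≤ ∫⁻ x in s, g x ∂μ) :
    f ≤ᵐ[μ] g := by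
  have hbounded : ∀ N : ℕ, ∀ᵐ x ∂μ, x ∈ {x | w x ≤ N} → f x ≤ g x := by
    intro N
    have hA : MeasurableSet {x | w x ≤ N} := measurableSet_le hw measurable_const
    refine (ae_restrict_iff' hA).1 <|
      ae_le_of_forall_setLIntegral_le_of_sigmaFinite hf fun s hs hμs => ?_
    rw [Measure.restrict_apply hs] at hμs
    rw [Measure.restrict_restrict hs]
    exact h _ (hs.inter hA) hμs
      (setLIntegral_lt_top_of_le_nnreal hμs.ne ⟨N, fun x hx => by simpa using hx.2⟩)
  filter_upwards [ae_all_iff.2 hbounded, hw_fin] with x hx hwx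
  obtain ⟨N, hN⟩ := ENNReal.exists_nat_gt hwx.ne
  exact hx N hN.le

theorem integral_norm_sq_eq_toReal_lintegral {E : Type*} [NormedAddCommGroup E] {f : α → E}
    (hf : AEStronglyMeasurable f μ) :
    ∫ x, ‖f x‖ ^ 2 ∂μ = (∫⁻ x, ‖f x‖ₑ ^ 2 ∂μ).toReal := by
  rw [integral_eq_lintegral_of_nonneg_ae (.of_forall fun x => by positivity)
    (hf.norm.aemeasurable.pow_const 2).aestronglyMeasurable]
  simp_rw [ENNReal.ofReal_pow (norm_nonneg _), ofReal_norm]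

theorem memLp_two_of_lintegral_enorm_sq_lt_top {E : Type*} [NormedAddCommGroup E] {f : α → E}
    (hf : AEStronglyMeasurable f μ) (h : ∫⁻ x, ‖f x‖ₑ ^ 2 ∂μ < ∞) : MemLp f 2 μ :=
  ⟨hf, by
    rw [eLpNorm_lt_top_iff_lintegral_rpow_enorm_lt_top two_ne_zero ofNat_ne_top]
    simpa using h⟩

end Integration

section Pushforward

variable {X : Type*} [MeasurableSpace X] {μ : Measure X} {φ : X → X}

noncomputable def pushforwardDensity (μ : Measure X) (φ : X → X) (ρ : X → ℝ≥0∞) : X → ℝ≥0∞ :=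
  ((μ.withDensity ρ).map φ).rnDeriv μ

theorem measurable_pushforwardDensity (ρ : X → ℝ≥0∞) : Measurable (pushforwardDensity μ φ ρ) :=
  Measure.measurable_rnDeriv _ _

variable [SigmaFinite μ]

theorem withDensity_pushforwardDensity (hφ : Measurable φ) (hns : μ.map φ ≪ μ)
    (ρ : X → ℝ≥0∞) :
    μ.withDensity (pushforwardDensity μ φ ρ) = (μ.withDensity ρ).map φ :=
  Measure.withDensity_rnDeriv_eq _ _ (((withDensity_absolutelyContinuous μ ρ).map hφ).trans hns)

theorem setLIntegral_pushforwardDensity (hφ : Measurable φ) (hns : μ.map φ ≪ μ)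
    (ρ : X → ℝ≥0∞) {s : Set X} (hs : MeasurableSet s) :
    ∫⁻ x in s, pushforwardDensity μ φ ρ x ∂μ = ∫⁻ x in φ ⁻¹' s, ρ x ∂μ := by
  rw [← withDensity_apply _ hs, withDensity_pushforwardDensity hφ hns, Measure.map_apply hφ hs,
    withDensity_apply _ (hφ hs)]

theorem lintegral_pushforwardDensity_mul (hφ : Measurable φ) (hns : μ.map φ ≪ μ)
    {ρ g : X → ℝ≥0∞} (hρ : Measurable ρ) (hg : Measurable g) :
    ∫⁻ x, pushforwardDensity μ φ ρ x * g x ∂μ = ∫⁻ x, ρ x * g (φ x) ∂μ := by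
  rw [← Pi.mul_def, ← lintegral_withDensity_eq_lintegral_mul _ (measurable_pushforwardDensity ρ) hg,
    withDensity_pushforwardDensity hφ hns, lintegral_map hg hφ]
  exact lintegral_withDensity_eq_lintegral_mul _ hρ (hg.comp hφ)

theorem setLIntegral_pushforwardDensity_add (hφ : Measurable φ) (hns : μ.map φ ≪ μ)
    {ρ : X → ℝ≥0∞} (hρ : Measurable ρ) (ρ' : X → ℝ≥0∞) {s : Set X} (hs : MeasurableSet s) :
    ∫⁻ x in s, (pushforwardDensity μ φ ρ x + pushforwardDensity μ φ ρ' x) ∂μ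
      = ∫⁻ x in φ ⁻¹' s, (ρ x + ρ' x) ∂μ := by
  rw [lintegral_add_left (measurable_pushforwardDensity ρ), lintegral_add_left hρ,
    setLIntegral_pushforwardDensity hφ hns _ hs, setLIntegral_pushforwardDensity hφ hns _ hs]

theorem pushforwardDensity_add_le_add (hφ : Measurable φ) (hns : μ.map φ ≪ μ)
    {ρ₁ ρ₂ ρ₃ ρ₄ : X → ℝ≥0∞} (hρ₁ : Measurable ρ₁) (hρ₃ : Measurable ρ₃) (h : ρ₁ + ρ₂ ≤ᵐ[μ] ρ₃ + ρ₄) :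
    pushforwardDensity μ φ ρ₁ + pushforwardDensity μ φ ρ₂
      ≤ᵐ[μ] pushforwardDensity μ φ ρ₃ + pushforwardDensity μ φ ρ₄ := by
  refine ae_le_of_forall_setLIntegral_le_of_sigmaFinite
    ((measurable_pushforwardDensity ρ₁).add (measurable_pushforwardDensity ρ₂)) fun s hs _ => ?_
  simp only [Pi.add_apply]
  rw [setLIntegral_pushforwardDensity_add hφ hns hρ₁ _ hs,
    setLIntegral_pushforwardDensity_add hφ hns hρ₃ _ hs]
  exact setLIntegral_mono_ae' (hφ hs) (h.mono fun x hx _ => hx)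

end Pushforward

section WeightedComposition

variable {X : Type*} [MeasurableSpace X] {μ : Measure X} [SigmaFinite μ] {u : X → ℂ} {φ : X → X}

def weightedComp (u : X → ℂ) (φ : X → X) (f : X → ℂ) : X → ℂ := fun x => u x * f (φ x)

theorem measurable_weightedComp (hu : Measurable u) (hφ : Measurable φ) {f : X → ℂ}
    (hf : Measurable f) : Measurable (weightedComp u φ f) :=
  hu.mul (hf.comp hφ)

theorem measurable_iterate_weightedComp (hu : Measurable u) (hφ : Measurable φ) {f : X → ℂ}
    (hf : Measurable f) (k : ℕ) : Measurable ((weightedComp u φ)^[k] f) := by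
  induction k with
  | zero => exact hf
  | succ k ih =>
    rw [Function.iterate_succ_apply']
    exact measurable_weightedComp hu hφ ih

theorem lintegral_mul_enorm_sq_weightedComp (hu : Measurable u) (hφ : Measurable φ)
    (hns : μ.map φ ≪ μ) {a : X → ℝ≥0∞} (ha : Measurable a) {f : X → ℂ} (hf : Measurable f) :
    ∫⁻ x, a x * ‖weightedComp u φ f x‖ₑ ^ 2 ∂μ
      = ∫⁻ x, pushforwardDensity μ φ (fun x => a x * (‖u x‖₊ : ℝ≥0∞) ^ 2) x * ‖f x‖ₑ ^ 2 ∂μ := by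
  rw [lintegral_pushforwardDensity_mul hφ hns (ρ := fun x => a x * (‖u x‖₊ : ℝ≥0∞) ^ 2)
    (ha.mul (hu.nnnorm.coe_nnreal_ennreal.pow_const 2)) (hf.enorm.pow_const 2)]
  simp only [weightedComp, enorm_eq_nnnorm, nnnorm_mul, coe_mul, mul_pow, mul_assoc]

variable {J : ℕ → X → ℝ≥0∞}

theorem lintegral_mul_enorm_sq_iterate_weightedComp (hu : Measurable u) (hφ : Measurable φ)
    (hns : μ.map φ ≪ μ) (hJm : ∀ i, Measurable (J i))
    (hJ : ∀ i, J (i + 1) = pushforwardDensity μ φ fun x => J i x * (‖u x‖₊ : ℝ≥0∞) ^ 2)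
    (i k : ℕ) {f : X → ℂ} (hf : Measurable f) :
    ∫⁻ x, J i x * ‖(weightedComp u φ)^[k] f x‖ₑ ^ 2 ∂μ = ∫⁻ x, J (i + k) x * ‖f x‖ₑ ^ 2 ∂μ := by
  induction k generalizing f with
  | zero => rfl
  | succ k ih =>
    rw [Function.iterate_succ_apply, ih (measurable_weightedComp hu hφ hf),
      lintegral_mul_enorm_sq_weightedComp hu hφ hns (hJm _) hf, ← hJ, add_assoc]

theorem lintegral_enorm_sq_iterate_weightedComp_indicator (hu : Measurable u)
    (hφ : Measurable φ) (hns : μ.map φ ≪ μ) (hJm : ∀ i, Measurable (J i)) (hJ0 : J 0 = fun _ => 1)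
    (hJ : ∀ i, J (i + 1) = pushforwardDensity μ φ fun x => J i x * (‖u x‖₊ : ℝ≥0∞) ^ 2)
    {s : Set X} (hs : MeasurableSet s) (k : ℕ) :
    ∫⁻ x, ‖(weightedComp u φ)^[k] (s.indicator fun _ => 1) x‖ₑ ^ 2 ∂μ = ∫⁻ x in s, J k x ∂μ := by
  have := lintegral_mul_enorm_sq_iterate_weightedComp hu hφ hns hJm hJ 0 k
    (measurable_const (a := (1 : ℂ)) |>.indicator hs)
  simp only [hJ0, one_mul, zero_add] at this
  rw [this, ← lintegral_indicator hs]
  refine lintegral_congr fun x => ?_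
  by_cases hx : x ∈ s <;> simp [hx]

theorem ae_one_add_le_two_mul_of_twoExpansive (hu : Measurable u) (hφ : Measurable φ)
    (hns : μ.map φ ≪ μ) (hJm : ∀ i, Measurable (J i)) (hJ0 : J 0 = fun _ => 1)
    (hJ : ∀ i, J (i + 1) = pushforwardDensity μ φ fun x => J i x * (‖u x‖₊ : ℝ≥0∞) ^ 2)
    (hfin : ∀ i, ∀ᵐ x ∂μ, J i x < ∞)
    (hexp : ∀ f : X → ℂ, Measurable f → (∀ i ≤ 2, MemLp ((weightedComp u φ)^[i] f) 2 μ) →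
      (∫ x, ‖f x‖ ^ 2 ∂μ) - 2 * (∫ x, ‖weightedComp u φ f x‖ ^ 2 ∂μ)
        + (∫ x, ‖weightedComp u φ (weightedComp u φ f) x‖ ^ 2 ∂μ) ≤ 0) :
    ∀ᵐ x ∂μ, 1 + J 2 x ≤ 2 * J 1 x := by
  have hw_fin : ∀ᵐ x ∂μ, J 1 x + J 2 x < ∞ := by
    filter_upwards [hfin 1, hfin 2] with x h1 h2 using add_lt_top.2 ⟨h1, h2⟩
  refine ae_le_of_forall_setLIntegral_le_of_ae_lt_top (measurable_const.add (hJm 2))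
    ((hJm 1).add (hJm 2)) hw_fin fun s hs hμs hw => ?_
  set f : X → ℂ := s.indicator fun _ => 1
  have hf : Measurable f := measurable_const.indicator hs
  have hnorm := lintegral_enorm_sq_iterate_weightedComp_indicator hu hφ hns hJm hJ0 hJ hs
  rw [Pi.add_def, lintegral_add_left (hJm 1)] at hw
  obtain ⟨hJ1, hJ2⟩ := add_lt_top.1 hw
  have hJs : ∀ k ≤ 2, ∫⁻ x in s, J k x ∂μ < ∞ := by
    intro k hk
    interval_cases k
    · simpa [hJ0] using hμs
    · exact hJ1
    · exact hJ2
  have hE := hexp f hf fun k hk => memLp_two_of_lintegral_enorm_sq_lt_top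
    (measurable_iterate_weightedComp hu hφ hf k).aestronglyMeasurable
    ((hnorm k).trans_lt (hJs k hk))
  have hint : ∀ k, ∫ x, ‖(weightedComp u φ)^[k] f x‖ ^ 2 ∂μ = (∫⁻ x in s, J k x ∂μ).toReal :=
    fun k => by rw [integral_norm_sq_eq_toReal_lintegral
      (measurable_iterate_weightedComp hu hφ hf k).aestronglyMeasurable, hnorm k]
  have h0 : ∫ x, ‖f x‖ ^ 2 ∂μ = (μ s).toReal := by simpa [hJ0] using hint 0
  have h1 : ∫ x, ‖weightedComp u φ f x‖ ^ 2 ∂μ = _ := hint 1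
  have h2 : ∫ x, ‖weightedComp u φ (weightedComp u φ f) x‖ ^ 2 ∂μ = _ := hint 2
  rw [h0, h1, h2] at hE
  rw [lintegral_add_left measurable_const, setLIntegral_one, lintegral_const_mul _ (hJm 1),
    ← toReal_le_toReal (add_ne_top.2 ⟨hμs.ne, hJ2.ne⟩) (mul_ne_top ofNat_ne_top hJ1.ne),
    toReal_add hμs.ne hJ2.ne, toReal_mul, toReal_ofNat]
  linarith

theorem ae_add_le_two_mul_succ (hu : Measurable u) (hφ : Measurable φ) (hns : μ.map φ ≪ μ)
    (hJm : ∀ i, Measurable (J i))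
    (hJ : ∀ i, J (i + 1) = pushforwardDensity μ φ fun x => J i x * (‖u x‖₊ : ℝ≥0∞) ^ 2) {k : ℕ}
    (hk : ∀ᵐ x ∂μ, J k x + J (k + 2) x ≤ 2 * J (k + 1) x) :
    ∀ᵐ x ∂μ, J (k + 1) x + J (k + 3) x ≤ 2 * J (k + 2) x := by
  have hρ : ∀ i, Measurable fun x => J i x * (‖u x‖₊ : ℝ≥0∞) ^ 2 :=
    fun i => (hJm i).mul (hu.nnnorm.coe_nnreal_ennreal.pow_const 2)
  have hweighted : (fun x => J k x * (‖u x‖₊ : ℝ≥0∞) ^ 2)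
      + (fun x => J (k + 2) x * (‖u x‖₊ : ℝ≥0∞) ^ 2)
      ≤ᵐ[μ] (fun x => J (k + 1) x * (‖u x‖₊ : ℝ≥0∞) ^ 2)
      + (fun x => J (k + 1) x * (‖u x‖₊ : ℝ≥0∞) ^ 2) := by
    filter_upwards [hk] with x hx
    simp only [Pi.add_apply, ← add_mul]
    exact mul_le_mul_of_nonneg_right (hx.trans_eq (two_mul _)) zero_le
  have hpushed := pushforwardDensity_add_le_add hφ hns (hρ k) (hρ (k + 1)) hweighted
  rw [← hJ, ← hJ, ← hJ] at hpushed
  filter_upwards [hpushed] with x hx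
  simpa only [Pi.add_apply, ← two_mul] using hx

end WeightedComposition

theorem stmt11_general
    {X : Type*} [MeasurableSpace X] (μ : Measure X) [SigmaFinite μ]
    (u : X → ℂ) (hu : Measurable u)
    (φ : X → X) (hφ : Measurable φ)
    (hns : (μ.map φ) ≪ μ)
    (J : ℕ → X → ℝ≥0∞)
    (hJ0 : J 0 = fun _ => 1)
    (hJ : ∀ i : ℕ, J (i + 1) =
      ((μ.withDensity fun x => J i x * (‖u x‖₊ : ℝ≥0∞) ^ 2).map φ).rnDeriv μ)
    (hfin : ∀ i, ∀ᵐ x ∂μ, J i x < ∞)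
    (T : (X → ℂ) → X → ℂ) (hT : T = fun f x => u x * f (φ x))
    (hexp : ∀ f : X → ℂ, Measurable f → (∀ i ≤ 2, MemLp (T^[i] f) 2 μ) →
      (∫ x, ‖f x‖ ^ 2 ∂μ) - 2 * (∫ x, ‖T f x‖ ^ 2 ∂μ)
        + (∫ x, ‖T (T f) x‖ ^ 2 ∂μ) ≤ 0) :
    ∀ k : ℕ, 1 ≤ k → ∀ᵐ x ∂μ, J (k - 1) x ≤ J k x := by
  obtain rfl : T = weightedComp u φ := hT
  change ∀ i, J (i + 1) = pushforwardDensity μ φ fun x => J i x * (‖u x‖₊ : ℝ≥0∞) ^ 2 at hJ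
  have hJm : ∀ i, Measurable (J i) := by
    rintro (_ | i)
    · rw [hJ0]
      exact measurable_const
    · rw [hJ i]
      exact measurable_pushforwardDensity _
  have hconcave : ∀ k, ∀ᵐ x ∂μ, J k x + J (k + 2) x ≤ 2 * J (k + 1) x := by
    intro k
    induction k with
    | zero =>
      simpa [hJ0] using ae_one_add_le_two_mul_of_twoExpansive hu hφ hns hJm hJ0 hJ hfin hexp
    | succ k ih => exact ae_add_le_two_mul_succ hu hφ hns hJm hJ ih
  intro k _
  filter_upwards [ae_all_iff.2 hfin, ae_all_iff.2 hconcave] with x hfin_x hconcave_x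
  exact ENNReal.monotone_of_add_le_two_mul (fun i => (hfin_x i).ne) hconcave_x (Nat.sub_le k 1)

/-- Proposition 2.9(ii): if `D((uC_φ)²)` is dense and `uC_φ` is 2-expansive,
then `J_k ≥ J_{k-1}` a.e. for all `k ≥ 1`. -/
theorem stmt11
    {X : Type*} [MeasurableSpace X] (μ : Measure X) [SigmaFinite μ]
    (u : X → ℂ) (hu : Measurable u)
    (φ : X → X) (hφ : Measurable φ)
    (hns : (μ.map φ) ≪ μ)
    (J : ℕ → X → ℝ≥0∞)
    (hJ0 : J 0 = fun _ => 1)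
    (hJ : ∀ i : ℕ, J (i + 1) =
      ((μ.withDensity fun x => J i x * (‖u x‖₊ : ℝ≥0∞) ^ 2).map φ).rnDeriv μ)
    (hfin : ∀ i, ∀ᵐ x ∂μ, J i x < ∞)
    (T : (X → ℂ) → X → ℂ) (hT : T = fun f x => u x * f (φ x))
    (hdense : Dense {f : Lp ℂ 2 μ |
        ∀ i ≤ 2, MemLp (T^[i] (f : X → ℂ)) 2 μ})
    (hexp : ∀ f : X → ℂ, Measurable f → (∀ i ≤ 2, MemLp (T^[i] f) 2 μ) →
      (∫ x, ‖f x‖ ^ 2 ∂μ) - 2 * (∫ x, ‖T f x‖ ^ 2 ∂μ)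
        + (∫ x, ‖T (T f) x‖ ^ 2 ∂μ) ≤ 0) :
    ∀ k : ℕ, 1 ≤ k → ∀ᵐ x ∂μ, J (k - 1) x ≤ J k x :=
  stmt11_general μ u hu φ hφ hns J hJ0 hJ hfin T hT hexp
end

section
/- Let u : X → ℂ be measurable on a σ-finite measure space and let M_u be the multiplication operator with dense domain D((M_u)ⁿ) ⊆ L²(μ). Then M_u is completely hyperexpansive (Σ_{i=0}^{n} (-1)^i C(n,i) ‖(M_u)^i f‖² ≤ 0 for all n ≥ 1 and f ∈ D((M_u)ⁿ)) if and only if for μ-a.e. x the sequence (|u(x)|^{2i})_{i≥0} is completely alternating, i.e. Σ_{i=0}^{n} (-1)^i C(n,i) |u(x)|^{2(m+i)} ≤ 0 for all m ≥ 0, n ≥ 1. -/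
open MeasureTheory Finset

open scoped ENNReal

/-!
Everything rests on the identity
`∑ cᵢ ‖(M_u)ⁱ f‖² = ∫ (∑ cᵢ |u|^{2i}) |f|² dμ`.
If the sequences `(|u(x)|^{2i})` are completely alternating, the integrand is pointwise
nonpositive. Conversely, testing with `f = u^m 𝟙_E`, where `E` has finite measure and `|u|` is
bounded on `E`, gives `∫_E ∑ cᵢ |u|^{2(m+i)} dμ ≤ 0`; the sets `{|u| ≤ k}` cover `X` and `μ` is
σ-finite, so the integrand is nonpositive almost everywhere.
-/

section

variable {X : Type*} [MeasurableSpace X] {μ : Measure X}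

lemma memLp_indicator_of_norm_le {E : Type*} [NormedAddCommGroup E] {f : X → E} {s : Set X}
    {C : ℝ} (p : ℝ≥0∞) (hf : AEStronglyMeasurable f μ) (hs : MeasurableSet s) (hμs : μ s ≠ ∞)
    (hC : ∀ x ∈ s, ‖f x‖ ≤ C) : MemLp (s.indicator f) p μ := by
  have : Fact (μ s < ∞) := ⟨hμs.lt_top⟩
  rw [memLp_indicator_iff_restrict hs]
  exact .of_bound hf.restrict C (ae_restrict_of_forall_mem hs hC)

theorem ae_nonpos_of_forall_setIntegral_nonpos_of_cover [SigmaFinite μ] {S : X → ℝ}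
    (A : ℕ → Set X) (hA : ∀ k, MeasurableSet (A k)) (hcover : ⋃ k, A k = Set.univ)
    (hS : ∀ k s, MeasurableSet s → μ s < ∞ → s ⊆ A k →
      IntegrableOn S s μ ∧ ∫ x in s, S x ∂μ ≤ 0) :
    ∀ᵐ x ∂μ, S x ≤ 0 := by
  rw [← Measure.restrict_univ (μ := μ), ← hcover, ae_restrict_iUnion_iff]
  intro k
  have hpiece : ∀ s, MeasurableSet s → μ.restrict (A k) s < ∞ →
      IntegrableOn S (s ∩ A k) μ ∧ ∫ x in s ∩ A k, S x ∂μ ≤ 0 := fun s hs hμs =>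
    hS k _ (hs.inter (hA k)) (by rwa [Measure.restrict_apply hs] at hμs) Set.inter_subset_right
  have hneg : 0 ≤ᵐ[μ.restrict (A k)] fun x => -S x := by
    refine ae_nonneg_of_forall_setIntegral_nonneg_of_sigmaFinite (fun s hs hμs => ?_)
      fun s hs hμs => ?_
    · rw [IntegrableOn, Measure.restrict_restrict hs]
      exact (hpiece s hs hμs).1.neg
    · rw [Measure.restrict_restrict hs, integral_neg, neg_nonneg]
      exact (hpiece s hs hμs).2
  filter_upwards [hneg] with x hx
  simpa using hx

end

section

variable {X 𝕜 : Type*} [NormedDivisionRing 𝕜]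

lemma norm_pow_mul_sq (a b : 𝕜) (i : ℕ) : ‖a ^ i * b‖ ^ 2 = ‖a‖ ^ (2 * i) * ‖b‖ ^ 2 := by
  rw [norm_mul, norm_pow, mul_pow, ← pow_mul, mul_comm i]

lemma sum_mul_norm_pow_mul_norm_indicator_sq (u : X → 𝕜) (s : Set X) (t : Finset ℕ)
    (c : ℕ → ℝ) (m : ℕ) (x : X) :
    (∑ i ∈ t, c i * ‖u x‖ ^ (2 * i)) * ‖s.indicator (fun y => u y ^ m) x‖ ^ 2 =
      s.indicator (fun y => ∑ i ∈ t, c i * ‖u y‖ ^ (2 * (m + i))) x := by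
  by_cases hx : x ∈ s
  · rw [Set.indicator_of_mem hx, Set.indicator_of_mem hx, sum_mul]
    refine sum_congr rfl fun i _ => ?_
    rw [norm_pow]
    ring
  · simp [Set.indicator_of_notMem hx]

end

section

variable {X 𝕜 : Type*} [MeasurableSpace X] {μ : Measure X} [NormedDivisionRing 𝕜]

lemma sum_mul_integral_norm_pow_mul_sq {u f : X → 𝕜} (t : Finset ℕ) (c : ℕ → ℝ)
    (hmem : ∀ i ∈ t, MemLp (fun x => u x ^ i * f x) 2 μ) :
    ∑ i ∈ t, c i * ∫ x, ‖u x ^ i * f x‖ ^ 2 ∂μ =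
      ∫ x, (∑ i ∈ t, c i * ‖u x‖ ^ (2 * i)) * ‖f x‖ ^ 2 ∂μ := by
  have hint : ∀ i ∈ t, Integrable (fun x => c i * ‖u x ^ i * f x‖ ^ 2) μ := fun i hi =>
    ((hmem i hi).integrable_norm_pow two_ne_zero).const_mul _
  simp_rw [← integral_const_mul, ← integral_finsetSum t hint, sum_mul, mul_assoc,
    norm_pow_mul_sq]

lemma integrable_sum_mul_norm_pow_mul_sq {u f : X → 𝕜} (t : Finset ℕ) (c : ℕ → ℝ)
    (hmem : ∀ i ∈ t, MemLp (fun x => u x ^ i * f x) 2 μ) :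
    Integrable (fun x => (∑ i ∈ t, c i * ‖u x‖ ^ (2 * i)) * ‖f x‖ ^ 2) μ := by
  simp_rw [sum_mul, mul_assoc, ← norm_pow_mul_sq]
  exact integrable_finsetSum t fun i hi =>
    ((hmem i hi).integrable_norm_pow two_ne_zero).const_mul _

lemma memLp_pow_mul_indicator_pow {u : X → 𝕜} (hu : AEStronglyMeasurable u μ) {s : Set X}
    (hs : MeasurableSet s) (hμs : μ s ≠ ∞) {C : ℝ} (hC : ∀ x ∈ s, ‖u x‖ ≤ C)
    (p : ℝ≥0∞) (i m : ℕ) :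
    MemLp (fun x => u x ^ i * s.indicator (fun y => u y ^ m) x) p μ := by
  have hpow : (fun x => u x ^ i * s.indicator (fun y => u y ^ m) x) =
      s.indicator fun x => u x ^ (i + m) :=
    funext fun x => by simp only [pow_add, Set.indicator_mul_right]
  rw [hpow]
  exact memLp_indicator_of_norm_le p (hu.pow _) hs hμs fun x hx =>
    (norm_pow (u x) _).trans_le (pow_le_pow_left₀ (norm_nonneg _) (hC x hx) _)

lemma integrableOn_sum_mul_norm_pow_and_setIntegral_eq {u : X → 𝕜}
    (hu : AEStronglyMeasurable u μ) {s : Set X} (hs : MeasurableSet s) (hμs : μ s ≠ ∞) {C : ℝ}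
    (hC : ∀ x ∈ s, ‖u x‖ ≤ C) (t : Finset ℕ) (c : ℕ → ℝ) (m : ℕ) :
    IntegrableOn (fun x => ∑ i ∈ t, c i * ‖u x‖ ^ (2 * (m + i))) s μ ∧
      ∫ x in s, ∑ i ∈ t, c i * ‖u x‖ ^ (2 * (m + i)) ∂μ =
        ∑ i ∈ t, c i * ∫ x, ‖u x ^ i * s.indicator (fun y => u y ^ m) x‖ ^ 2 ∂μ := by
  have hmem : ∀ i ∈ t, MemLp (fun x => u x ^ i * s.indicator (fun y => u y ^ m) x) 2 μ :=
    fun i _ => memLp_pow_mul_indicator_pow hu hs hμs hC 2 i m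
  have hindicator : (s.indicator fun x => ∑ i ∈ t, c i * ‖u x‖ ^ (2 * (m + i))) =
      fun x => (∑ i ∈ t, c i * ‖u x‖ ^ (2 * i)) * ‖s.indicator (fun y => u y ^ m) x‖ ^ 2 :=
    funext fun x => (sum_mul_norm_pow_mul_norm_indicator_sq u s t c m x).symm
  rw [← integrable_indicator_iff hs, ← integral_indicator hs, hindicator,
    sum_mul_integral_norm_pow_mul_sq t c hmem]
  exact ⟨integrable_sum_mul_norm_pow_mul_sq t c hmem, rfl⟩

end

theorem stmt15_general
    {X : Type*} [MeasurableSpace X] (μ : Measure X) [SigmaFinite μ]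
    (u : X → ℂ) (hu : Measurable u) :
    (∀ n : ℕ, 1 ≤ n →
        ∀ f : X → ℂ, Measurable f →
          (∀ i ≤ n, MemLp (fun x => u x ^ i * f x) 2 μ) →
          ∑ i ∈ range (n + 1),
            (-1 : ℝ) ^ i * (n.choose i) * ∫ x, ‖u x ^ i * f x‖ ^ 2 ∂μ ≤ 0) ↔
      ∀ᵐ x ∂μ, ∀ m n : ℕ, 1 ≤ n →
        ∑ i ∈ range (n + 1),
          (-1 : ℝ) ^ i * (n.choose i) * ‖u x‖ ^ (2 * (m + i)) ≤ 0 := by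
  constructor
  · intro h
    simp only [ae_all_iff, Filter.eventually_imp_distrib_left]
    intro m n hn
    refine ae_nonpos_of_forall_setIntegral_nonpos_of_cover (fun k : ℕ => {x | ‖u x‖ ≤ k})
      (fun k => measurableSet_le hu.norm measurable_const)
      (Set.iUnion_eq_univ_iff.mpr fun x => exists_nat_ge ‖u x‖) fun k s hs hμs hsub => ?_
    obtain ⟨hint, heq⟩ := integrableOn_sum_mul_norm_pow_and_setIntegral_eq
      hu.aestronglyMeasurable hs hμs.ne hsub (range (n + 1)) (fun i => (-1 : ℝ) ^ i * n.choose i) m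
    refine ⟨hint, heq ▸ h n hn _ ((hu.pow_const m).indicator hs) fun i _ => ?_⟩
    exact memLp_pow_mul_indicator_pow hu.aestronglyMeasurable hs hμs.ne hsub 2 i m
  · intro h n hn f _ hmem
    rw [sum_mul_integral_norm_pow_mul_sq _ _ fun i hi => hmem i (mem_range_succ_iff.mp hi)]
    refine integral_nonpos_of_ae ?_
    filter_upwards [h] with x hx
    exact mul_nonpos_of_nonpos_of_nonneg (by simpa using hx 0 n hn) (by positivity)

/-- Corollary 2.14(ii): `M_u` is completely hyperexpansive iff for a.e. `x` the
sequence `(|u(x)|^{2i})_{i≥0}` is completely alternating. -/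
theorem stmt15
    {X : Type*} [MeasurableSpace X] (μ : Measure X) [SigmaFinite μ]
    (u : X → ℂ) (hu : Measurable u)
    (hdense : ∀ n : ℕ, Dense {f : Lp ℂ 2 μ |
        ∀ i ≤ n, MemLp (fun x => u x ^ i * (f : X → ℂ) x) 2 μ}) :
    (∀ n : ℕ, 1 ≤ n →
        ∀ f : X → ℂ, Measurable f →
          (∀ i ≤ n, MemLp (fun x => u x ^ i * f x) 2 μ) →
          ∑ i ∈ range (n + 1),
            (-1 : ℝ) ^ i * (n.choose i) * ∫ x, ‖u x ^ i * f x‖ ^ 2 ∂μ ≤ 0) ↔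
      ∀ᵐ x ∂μ, ∀ m n : ℕ, 1 ≤ n →
        ∑ i ∈ range (n + 1),
          (-1 : ℝ) ^ i * (n.choose i) * ‖u x‖ ^ (2 * (m + i)) ≤ 0 :=
  stmt15_general μ u hu
end

section
/- Let C_φ be a densely defined 2-expansive composition operator on L²(μ) (D((C_φ)²) dense) over a finite measure space (X, Σ, μ). Then C_φ is an isometry; equivalently, h_1 = d(μ∘φ⁻¹)/dμ = 1 μ-a.e., i.e. φ is measure-preserving. -/
open MeasureTheory ENNReal

/-! Testing 2-expansivity of `C_φ` on the indicator of `φ^{-n}(S)` shows that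
`n ↦ μ(φ^{-n}(S))` is a concave sequence. A nonnegative concave sequence cannot
decrease, so `μ S ≤ μ(φ⁻¹(S))` for every measurable `S`, i.e. `μ ≤ μ ∘ φ⁻¹`. Both measures
have the same finite total mass, hence they are equal and `h₁ = 1` a.e. -/

/-- 2-expansivity `‖f‖² - 2‖C_φ f‖² + ‖C_φ² f‖² ≤ 0` of the composition operator `C_φ`
on `L²(μ)`, for `f` in the domain of `C_φ²`. -/
def IsTwoExpansiveCompOp {X : Type*} [MeasurableSpace X] (μ : Measure X) (φ : X → X) : Prop :=
  ∀ f : X → ℂ, Measurable f →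
    (∀ i ≤ 2, MemLp (fun x => f (φ^[i] x)) 2 μ) →
    (∫ x, ‖f x‖ ^ 2 ∂μ) - 2 * (∫ x, ‖f (φ x)‖ ^ 2 ∂μ) + (∫ x, ‖f (φ (φ x))‖ ^ 2 ∂μ) ≤ 0

lemma apply_zero_le_apply_one_of_concave {a : ℕ → ℝ} (ha : ∀ n, 0 ≤ a n)
    (hconc : ∀ n, a n - 2 * a (n + 1) + a (n + 2) ≤ 0) : a 0 ≤ a 1 := by
  by_contra! hlt
  have hstep : ∀ n, a (n + 1) - a n ≤ a 1 - a 0 := by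
    intro n
    induction n with
    | zero => exact le_rfl
    | succ k ih => linarith [hconc k]
  have hlin : ∀ n : ℕ, a n ≤ a 0 - n * (a 0 - a 1) := by
    intro n
    induction n with
    | zero => simp
    | succ k ih => push_cast; linarith [hstep k]
  obtain ⟨n, hn⟩ := exists_nat_gt (a 0 / (a 0 - a 1))
  rw [div_lt_iff₀ (by linarith)] at hn
  linarith [hlin n, ha n]

section

variable {X : Type*} [MeasurableSpace X] {μ : Measure X} {φ : X → X}

lemma integral_norm_indicator_one_sq {s : Set X} (hs : MeasurableSet s) :
    ∫ x, ‖s.indicator (1 : X → ℂ) x‖ ^ 2 ∂μ = μ.real s := by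
  have hpt : ∀ x, ‖s.indicator (1 : X → ℂ) x‖ ^ 2 = s.indicator 1 x := by
    intro x
    by_cases hx : x ∈ s <;> simp [hx]
  simp_rw [hpt]
  exact integral_indicator_one hs

lemma IsTwoExpansiveCompOp.measureReal_concave [IsFiniteMeasure μ]
    (h : IsTwoExpansiveCompOp μ φ) (hφ : Measurable φ) {S : Set X} (hS : MeasurableSet S) :
    μ.real S - 2 * μ.real (φ ⁻¹' S) + μ.real (φ ⁻¹' (φ ⁻¹' S)) ≤ 0 := by
  have hmemLp : ∀ i ≤ 2, MemLp (fun x => S.indicator (1 : X → ℂ) (φ^[i] x)) 2 μ := by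
    intro i _
    refine MemLp.of_bound ((measurable_one.indicator hS).comp (hφ.iterate i)).aestronglyMeasurable
      1 (Filter.Eventually.of_forall fun x => ?_)
    by_cases hx : φ^[i] x ∈ S <;> simp [hx]
  have := h _ (measurable_one.indicator hS) hmemLp
  simp_rw [← Set.indicator_comp_right, Pi.one_comp] at this
  rwa [integral_norm_indicator_one_sq hS, integral_norm_indicator_one_sq (hS.preimage hφ),
    integral_norm_indicator_one_sq ((hS.preimage hφ).preimage hφ)] at this

lemma IsTwoExpansiveCompOp.measure_le_measure_preimage [IsFiniteMeasure μ]
    (h : IsTwoExpansiveCompOp μ φ) (hφ : Measurable φ) {S : Set X} (hS : MeasurableSet S) :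
    μ S ≤ μ (φ ⁻¹' S) := by
  have hconc : ∀ n, μ.real (φ^[n] ⁻¹' S) - 2 * μ.real (φ^[n + 1] ⁻¹' S)
      + μ.real (φ^[n + 2] ⁻¹' S) ≤ 0 := fun n => by
    simpa only [Function.iterate_succ, Set.preimage_comp]
      using h.measureReal_concave hφ (hS.preimage (hφ.iterate n))
  have := apply_zero_le_apply_one_of_concave (fun n => measureReal_nonneg) hconc
  simp only [Function.iterate_zero, Function.iterate_one, Set.preimage_id] at this
  exact (ENNReal.toReal_le_toReal (measure_ne_top μ _) (measure_ne_top μ _)).mp this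

end

theorem stmt18_general
    {X : Type*} [MeasurableSpace X] (μ : Measure X) [IsFiniteMeasure μ]
    (φ : X → X) (hφ : Measurable φ)
    (hexp : ∀ f : X → ℂ, Measurable f →
      (∀ i ≤ 2, MemLp (fun x => f (φ^[i] x)) 2 μ) →
      (∫ x, ‖f x‖ ^ 2 ∂μ) - 2 * (∫ x, ‖f (φ x)‖ ^ 2 ∂μ)
        + (∫ x, ‖f (φ (φ x))‖ ^ 2 ∂μ) ≤ 0) :
    (∀ᵐ x ∂μ, (μ.map φ).rnDeriv μ x = 1) ∧ μ.map φ = μ := by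
  have hexp : IsTwoExpansiveCompOp μ φ := hexp
  have hle : μ ≤ μ.map φ := Measure.le_intro fun S hS _ => by
    rw [Measure.map_apply hφ hS]
    exact hexp.measure_le_measure_preimage hφ hS
  have hmap : μ.map φ = μ := (Measure.eq_of_le_of_measure_univ_eq hle
    (by rw [Measure.map_apply hφ .univ, Set.preimage_univ])).symm
  refine ⟨?_, hmap⟩
  rw [hmap]
  exact μ.rnDeriv_self

/-- Corollary 2.16(i): a densely defined 2-expansive composition operator `C_φ`
on a finite measure space is an isometry: `h₁ = d(μ∘φ⁻¹)/dμ = 1` a.e., i.e. `φ`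
is measure-preserving. -/
theorem stmt18
    {X : Type*} [MeasurableSpace X] (μ : Measure X) [IsFiniteMeasure μ]
    (φ : X → X) (hφ : Measurable φ)
    (hns : (μ.map φ) ≪ μ)
    (hdense : Dense {f : Lp ℂ 2 μ |
        ∀ i ≤ 2, MemLp (fun x => (f : X → ℂ) (φ^[i] x)) 2 μ})
    (hexp : ∀ f : X → ℂ, Measurable f →
      (∀ i ≤ 2, MemLp (fun x => f (φ^[i] x)) 2 μ) →
      (∫ x, ‖f x‖ ^ 2 ∂μ) - 2 * (∫ x, ‖f (φ x)‖ ^ 2 ∂μ)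
        + (∫ x, ‖f (φ (φ x))‖ ^ 2 ∂μ) ≤ 0) :
    (∀ᵐ x ∂μ, (μ.map φ).rnDeriv μ x = 1) ∧ μ.map φ = μ :=
  stmt18_general μ φ hφ hexp
end
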